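/- arXiv:2410.20738 — 9 statements merged into one kernel-verified Lean document; each statement's English description precedes it below -/
import Mathlib

section
/- If v_1, …, v_n are unit vectors in R^d, and there exists a real number α with 0 < α < 1 such that ⟨v_i, v_j⟩ = α or ⟨v_i, v_j⟩ = −α for all i ≠ j, then n ≤ d(d+1)/2. -/
open scoped RealInnerProductSpace

open Finset in
/-- **Gerzon's bound.** If `v 1, …, v n` are unit vectors in `ℝ^d` whose pairwise inner
products are all `±α` for some `0 < α < 1`, then `n ≤ d(d+1)/2`. -/
theorem gerzon_bound (n d : ℕ) (v : Fin n → EuclideanSpace ℝ (Fin d))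
    (hunit : ∀ i, ‖v i‖ = 1)
    (hangle : ∃ α : ℝ, 0 < α ∧ α < 1 ∧
      ∀ i j, i ≠ j → ⟪v i, v j⟫ = α ∨ ⟪v i, v j⟫ = -α) :
    n ≤ d * (d + 1) / 2 := by
  classical
  obtain ⟨α, hα0, hα1, hij⟩ := hangle
  set g : Fin n → Sym2 (Fin d) → ℝ := fun i =>
    Sym2.lift ⟨fun a b => v i a * v i b, fun a b => mul_comm _ _⟩ with hg
  have hli : LinearIndependent ℝ g := by
    rw [Fintype.linearIndependent_iff]
    intro c hc
    have key : ∀ a b : Fin d, ∑ i, c i * (v i a * v i b) = 0 := by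
      intro a b
      have := congrFun hc s(a, b)
      simpa [hg] using this
    have h2 : ∀ j, ∑ i, c i * ⟪v i, v j⟫ ^ 2 = 0 := by
      intro j
      calc ∑ i, c i * ⟪v i, v j⟫ ^ 2
          = ∑ i, ∑ a, ∑ b, c i * (v i a * v i b) * (v j a * v j b) := by
            refine Finset.sum_congr rfl fun i _ => ?_
            simp only [PiLp.inner_apply, RCLike.inner_apply, conj_trivial, sq]
            rw [Finset.sum_mul_sum, Finset.mul_sum]
            refine Finset.sum_congr rfl fun a _ => ?_
            rw [Finset.mul_sum]
            refine Finset.sum_congr rfl fun b _ => ?_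
            ring
        _ = ∑ a, ∑ b, (∑ i, c i * (v i a * v i b)) * (v j a * v j b) := by
            rw [Finset.sum_comm]
            refine Finset.sum_congr rfl fun a _ => ?_
            rw [Finset.sum_comm]
            refine Finset.sum_congr rfl fun b _ => ?_
            rw [Finset.sum_mul]
        _ = 0 := by simp [key]
    have hself : ∀ j, ⟪v j, v j⟫ = (1 : ℝ) := by
      intro j
      rw [real_inner_self_eq_norm_sq, hunit j, one_pow]
    have hsq : ∀ i j, i ≠ j → ⟪v i, v j⟫ ^ 2 = α ^ 2 := by
      intro i j h
      rcases hij i j h with h' | h' <;> rw [h'] <;> ring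
    set S := ∑ i, c i with hS
    have h3 : ∀ j, c j * (1 - α ^ 2) + α ^ 2 * S = 0 := by
      intro j
      have := h2 j
      rw [← Finset.add_sum_erase _ _ (Finset.mem_univ j), hself j] at this
      have herase : ∑ i ∈ Finset.univ.erase j, c i * ⟪v i, v j⟫ ^ 2
          = α ^ 2 * (S - c j) := by
        have hterm : ∀ i ∈ Finset.univ.erase j, c i * ⟪v i, v j⟫ ^ 2 = α ^ 2 * c i := by
          intro i hi
          rw [hsq i j (Finset.ne_of_mem_erase hi)]; ring
        rw [Finset.sum_congr rfl hterm, ← Finset.mul_sum,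
          Finset.sum_erase_eq_sub (Finset.mem_univ j), ← hS]
      rw [herase] at this
      linarith [this]
    -- sum over j to get S = 0
    have hsum : S * ((1 - α ^ 2) + n * α ^ 2) = 0 := by
      have := Finset.sum_congr rfl (fun j (_ : j ∈ Finset.univ) => h3 j)
      simp only [Finset.sum_add_distrib, Finset.sum_const, Finset.card_univ,
        Fintype.card_fin, ← Finset.sum_mul, ← hS, Finset.sum_const_zero,
        nsmul_eq_mul] at this
      ring_nf
      ring_nf at this
      linarith [this]
    have hpos : (1 - α ^ 2) + n * α ^ 2 > 0 := by
      have : α ^ 2 < 1 := by nlinarith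
      have : (0:ℝ) ≤ n * α ^ 2 := by positivity
      nlinarith
    have hS0 : S = 0 := by
      rcases mul_eq_zero.mp hsum with h | h
      · exact h
      · exact absurd h (ne_of_gt hpos)
    intro j
    have := h3 j
    rw [hS0] at this
    have h1 : (1 : ℝ) - α ^ 2 ≠ 0 := by nlinarith
    have hcj : c j * (1 - α ^ 2) = 0 := by linarith
    exact (mul_eq_zero.mp hcj).resolve_right h1
  have hcard := hli.fintype_card_le_finrank
  rw [Module.finrank_pi, Sym2.card] at hcard
  simpa [Fintype.card_fin, Nat.choose_two_right, Nat.add_sub_cancel,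
    Nat.mul_comm] using hcard
end

section
/- For every real α with 0 < α < 1 there exists Δ (depending only on α) with the following property: for every d and every family of unit vectors v_1, …, v_n ∈ R^d with ⟨v_i, v_j⟩ = ±α for all i ≠ j, there exist signs ε_1, …, ε_n ∈ {−1, +1} such that for each i, the number of indices j ≠ i with ⟨ε_i v_i, ε_j v_j⟩ = −α is at most Δ. -/
open scoped RealInnerProductSpace
open Finset
set_option linter.unusedSectionVars false
set_option maxHeartbeats 1000000

section helpers
variable {E : Type*} [NormedAddCommGroup E] [InnerProductSpace ℝ E] {ι : Type*} [DecidableEq ι]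

lemma inner_sum_const (x : E) (f : ι → E) (A : Finset ι) (c : ℝ)
    (h : ∀ j ∈ A, ⟪x, f j⟫ = c) :
    ⟪x, ∑ j ∈ A, f j⟫ = (A.card : ℝ) * c := by
  rw [inner_sum, Finset.sum_congr rfl h, Finset.sum_const, nsmul_eq_mul]

lemma sum_inner_cross (f : ι → E) (A B : Finset ι) (c : ℝ)
    (h : ∀ j ∈ A, ∀ k ∈ B, ⟪f j, f k⟫ = c) :
    ⟪∑ j ∈ A, f j, ∑ k ∈ B, f k⟫ = (A.card : ℝ) * (B.card : ℝ) * c := by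
  rw [sum_inner]
  have h2 : ∀ j ∈ A, ⟪f j, ∑ k ∈ B, f k⟫ = (B.card : ℝ) * c := fun j hj =>
    inner_sum_const (f j) f B c (h j hj)
  rw [Finset.sum_congr rfl h2, Finset.sum_const, nsmul_eq_mul]; ring

lemma sum_inner_self (f : ι → E) (A : Finset ι) (c : ℝ)
    (hf : ∀ j ∈ A, ‖f j‖ = 1)
    (h : ∀ j ∈ A, ∀ k ∈ A, j ≠ k → ⟪f j, f k⟫ = c) :
    ⟪∑ j ∈ A, f j, ∑ k ∈ A, f k⟫ = (A.card : ℝ) + ((A.card : ℝ)^2 - (A.card : ℝ)) * c := by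
  rw [sum_inner]
  have key : ∀ j ∈ A, ⟪f j, ∑ k ∈ A, f k⟫ = 1 + ((A.card : ℝ) - 1) * c := by
    intro j hj
    have hA1 : 1 ≤ A.card := Finset.one_le_card.mpr ⟨j, hj⟩
    rw [inner_sum, ← Finset.sum_erase_add _ _ hj]
    have h1 : ∀ k ∈ A.erase j, ⟪f j, f k⟫ = c := fun k hk =>
      h j hj k (Finset.mem_of_mem_erase hk) (Ne.symm (Finset.ne_of_mem_erase hk))
    rw [Finset.sum_congr rfl h1, Finset.sum_const, nsmul_eq_mul,
      Finset.card_erase_of_mem hj, real_inner_self_eq_norm_sq, hf j hj,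
      Nat.cast_sub hA1]
    push_cast
    ring
  rw [Finset.sum_congr rfl key, Finset.sum_const, nsmul_eq_mul]
  ring

lemma neg_clique {α : ℝ} (hα0 : 0 < α) (f : ι → E) (A : Finset ι)
    (hf : ∀ j ∈ A, ‖f j‖ = 1)
    (h : ∀ j ∈ A, ∀ k ∈ A, j ≠ k → ⟪f j, f k⟫ = -α) :
    ((A.card : ℝ) - 1) * α ≤ 1 := by
  rcases A.eq_empty_or_nonempty with h0 | ⟨j, hj⟩
  · simp [h0]; linarith
  · have h1 : (0:ℝ) ≤ ⟪∑ j ∈ A, f j, ∑ j ∈ A, f j⟫ := real_inner_self_nonneg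
    rw [sum_inner_self f A (-α) hf h] at h1
    have ha1 : (1:ℝ) ≤ (A.card : ℝ) := by
      exact_mod_cast Finset.one_le_card.mpr ⟨j, hj⟩
    nlinarith

lemma star_contra {α : ℝ} (hα0 : 0 < α) (hα1 : α < 1)
    (x : E) (f : ι → E) (A B : Finset ι) (hx : ‖x‖ = 1)
    (hfA : ∀ j ∈ A, ‖f j‖ = 1) (hfB : ∀ j ∈ B, ‖f j‖ = 1)
    (hA : ∀ j ∈ A, ⟪x, f j⟫ = -α) (hB : ∀ j ∈ B, ⟪x, f j⟫ = α)
    (hAA : ∀ j ∈ A, ∀ k ∈ A, j ≠ k → ⟪f j, f k⟫ = α)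
    (hBB : ∀ j ∈ B, ∀ k ∈ B, j ≠ k → ⟪f j, f k⟫ = α)
    (hAB : ∀ j ∈ A, ∀ k ∈ B, ⟪f j, f k⟫ = α)
    (ha : (1 - α)/α^2 + 1 ≤ (A.card : ℝ)) (hb : (1 - α)/α^2 + 1 ≤ (B.card : ℝ)) :
    False := by
  set a := (A.card : ℝ) with haa
  set b := (B.card : ℝ) with hbb
  have hα2 : (0:ℝ) < α^2 := by positivity
  have hdiv0 : (0:ℝ) ≤ (1 - α)/α^2 := div_nonneg (by linarith) hα2.le
  have ha1 : 1 ≤ a := by linarith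
  have hb1 : 1 ≤ b := by linarith
  have hXa : 1 - α ≤ (a - 1) * α^2 := by
    have h' : (1 - α)/α^2 ≤ a - 1 := by linarith
    calc 1 - α = (1-α)/α^2 * α^2 := by field_simp
    _ ≤ (a-1)*α^2 := mul_le_mul_of_nonneg_right h' (le_of_lt hα2)
  have hXb : 1 - α ≤ (b - 1) * α^2 := by
    have h' : (1 - α)/α^2 ≤ b - 1 := by linarith
    calc 1 - α = (1-α)/α^2 * α^2 := by field_simp
    _ ≤ (b-1)*α^2 := mul_le_mul_of_nonneg_right h' (le_of_lt hα2)
  set SA := ∑ j ∈ A, f j with hSA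
  set SB := ∑ j ∈ B, f j with hSB
  have hSAA : ⟪SA, SA⟫ = a + (a^2 - a)*α := sum_inner_self f A α hfA hAA
  have hSBB : ⟪SB, SB⟫ = b + (b^2 - b)*α := sum_inner_self f B α hfB hBB
  have hSAB : ⟪SA, SB⟫ = a*b*α := sum_inner_cross f A B α hAB
  have hxA : ⟪x, SA⟫ = a * (-α) := inner_sum_const x f A (-α) hA
  have hxB : ⟪x, SB⟫ = b * α := inner_sum_const x f B α hB
  set y := (α*a*b) • x + b • SA - a • SB with hy
  have hxA' : ⟪SA, x⟫ = a * (-α) := by rw [real_inner_comm]; exact hxA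
  have hxB' : ⟪SB, x⟫ = b * α := by rw [real_inner_comm]; exact hxB
  have hSBA : ⟪SB, SA⟫ = a*b*α := by rw [real_inner_comm]; exact hSAB
  have hxx : ⟪x, x⟫ = 1 := by rw [real_inner_self_eq_norm_sq, hx]; norm_num
  have hyy : ⟪y, y⟫ = (1-α)*(a*b*b) + (1-α)*(a*a*b) - 3*(α^2*a^2*b^2) := by
    rw [hy]
    simp only [inner_sub_left, inner_sub_right, inner_add_left, inner_add_right,
      real_inner_smul_left, real_inner_smul_right, hxx, hxA, hxB, hxA', hxB', hSAB, hSBA,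
      hSAA, hSBB]
    ring
  have h0 : (0:ℝ) ≤ ⟪y, y⟫ := real_inner_self_nonneg
  rw [hyy] at h0
  have p1 : (1-α)*(a*b*b) ≤ ((a-1)*α^2)*(a*b*b) :=
    mul_le_mul_of_nonneg_right hXa (by positivity)
  have p2 : (1-α)*(a*a*b) ≤ ((b-1)*α^2)*(a*a*b) :=
    mul_le_mul_of_nonneg_right hXb (by positivity)
  nlinarith [mul_pos (mul_pos hα2 (mul_pos (lt_of_lt_of_le one_pos ha1) (lt_of_lt_of_le one_pos hb1))) (mul_pos (lt_of_lt_of_le one_pos ha1) (lt_of_lt_of_le one_pos hb1)), mul_pos hα2 (mul_pos (lt_of_lt_of_le one_pos ha1) (lt_of_lt_of_le one_pos hb1))]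

end helpers

theorem ramsey_exists (s t : ℕ) :
    ∃ N : ℕ, ∀ {ι : Type} [DecidableEq ι] (r : ι → ι → Prop),
      (∀ a b, r a b → r b a) → ∀ V : Finset ι, N ≤ V.card →
      (∃ K, K ⊆ V ∧ s ≤ K.card ∧ ∀ j ∈ K, ∀ k ∈ K, j ≠ k → r j k) ∨
      (∃ K, K ⊆ V ∧ t ≤ K.card ∧ ∀ j ∈ K, ∀ k ∈ K, j ≠ k → ¬ r j k) := by
  have main : ∀ m s t : ℕ, s + t ≤ m →
      ∃ N : ℕ, ∀ {ι : Type} [DecidableEq ι] (r : ι → ι → Prop),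
      (∀ a b, r a b → r b a) → ∀ V : Finset ι, N ≤ V.card →
      (∃ K, K ⊆ V ∧ s ≤ K.card ∧ ∀ j ∈ K, ∀ k ∈ K, j ≠ k → r j k) ∨
      (∃ K, K ⊆ V ∧ t ≤ K.card ∧ ∀ j ∈ K, ∀ k ∈ K, j ≠ k → ¬ r j k) := by
    intro m
    induction m with
    | zero =>
      intro s t hst
      have hs : s = 0 := by omega
      exact ⟨0, fun r _ V _ => Or.inl ⟨∅, Finset.empty_subset _, by simp [hs],
        fun j hj => absurd hj (Finset.notMem_empty j)⟩⟩
    | succ m ih =>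
      intro s t hst
      rcases s with _ | s
      · exact ⟨0, fun r _ V _ => Or.inl ⟨∅, Finset.empty_subset _, by simp,
          fun j hj => absurd hj (Finset.notMem_empty j)⟩⟩
      rcases t with _ | t
      · exact ⟨0, fun r _ V _ => Or.inr ⟨∅, Finset.empty_subset _, by simp,
          fun j hj => absurd hj (Finset.notMem_empty j)⟩⟩
      obtain ⟨N₁, h₁⟩ := ih s (t+1) (by omega)
      obtain ⟨N₂, h₂⟩ := ih (s+1) t (by omega)
      refine ⟨N₁ + N₂ + 1, ?_⟩
      intro ι _ r hsym V hV
      classical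
      have hne : V.Nonempty := Finset.card_pos.mp (by omega)
      obtain ⟨v0, hv0⟩ := hne
      set W := V.erase v0 with hW
      have hWc : W.card + 1 = V.card := by
        rw [hW, Finset.card_erase_of_mem hv0]
        have : 1 ≤ V.card := by omega
        omega
      set P := W.filter (fun w => r v0 w) with hP
      set Q := W.filter (fun w => ¬ r v0 w) with hQ
      have hPQ : P.card + Q.card = W.card := Finset.card_filter_add_card_filter_not _
      have hPsub : P ⊆ V := (Finset.filter_subset _ _).trans (Finset.erase_subset _ _)
      have hQsub : Q ⊆ V := (Finset.filter_subset _ _).trans (Finset.erase_subset _ _)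
      by_cases hPc : N₁ ≤ P.card
      · rcases h₁ r hsym P hPc with ⟨K, hKP, hKc, hKcl⟩ | ⟨K, hKP, hKc, hKcl⟩
        · refine Or.inl ⟨insert v0 K, ?_, ?_, ?_⟩
          · intro x hx
            rcases Finset.mem_insert.mp hx with rfl | hx'
            · exact hv0
            · exact hPsub (hKP hx')
          · have hv0K : v0 ∉ K := fun h =>
              Finset.notMem_erase v0 V (Finset.mem_of_mem_filter _ (hKP h))
            rw [Finset.card_insert_of_notMem hv0K]; omega
          · intro j hj k hk hjk
            rcases Finset.mem_insert.mp hj with rfl | hj' <;>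
              rcases Finset.mem_insert.mp hk with rfl | hk'
            · exact absurd rfl hjk
            · exact (Finset.mem_filter.mp (hKP hk')).2
            · exact hsym _ _ (Finset.mem_filter.mp (hKP hj')).2
            · exact hKcl j hj' k hk' hjk
        · exact Or.inr ⟨K, hKP.trans hPsub, hKc, hKcl⟩
      · have hQc : N₂ ≤ Q.card := by omega
        rcases h₂ r hsym Q hQc with ⟨K, hKQ, hKc, hKcl⟩ | ⟨K, hKQ, hKc, hKcl⟩
        · exact Or.inl ⟨K, hKQ.trans hQsub, hKc, hKcl⟩
        · refine Or.inr ⟨insert v0 K, ?_, ?_, ?_⟩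
          · intro x hx
            rcases Finset.mem_insert.mp hx with rfl | hx'
            · exact hv0
            · exact hQsub (hKQ hx')
          · have hv0K : v0 ∉ K := fun h =>
              Finset.notMem_erase v0 V (Finset.mem_of_mem_filter _ (hKQ h))
            rw [Finset.card_insert_of_notMem hv0K]; omega
          · intro j hj k hk hjk
            rcases Finset.mem_insert.mp hj with rfl | hj' <;>
              rcases Finset.mem_insert.mp hk with rfl | hk'
            · exact absurd rfl hjk
            · exact (Finset.mem_filter.mp (hKQ hk')).2
            · exact fun hr => (Finset.mem_filter.mp (hKQ hj')).2 (hsym _ _ hr)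
            · exact hKcl j hj' k hk' hjk
  exact main (s + t) s t le_rfl

/-- **Switching to bounded degree.** For every `0 < α < 1` there exists `Δ` (depending
only on `α`) such that, given any family of unit vectors in `ℝ^d` with pairwise inner
products `±α`, one can choose signs `ε i ∈ {−1, +1}` so that each signed vector has
inner product `−α` with at most `Δ` of the other signed vectors. -/
theorem switching_to_bounded_degree (α : ℝ) (hα0 : 0 < α) (hα1 : α < 1) :
    ∃ Δ : ℕ, ∀ (d n : ℕ) (v : Fin n → EuclideanSpace ℝ (Fin d)),
      (∀ i, ‖v i‖ = 1) →
      (∀ i j, i ≠ j → ⟪v i, v j⟫ = α ∨ ⟪v i, v j⟫ = -α) →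
      ∃ ε : Fin n → ℝ, (∀ i, ε i = 1 ∨ ε i = -1) ∧
        ∀ i, Nat.card {j : Fin n // j ≠ i ∧ ⟪ε i • v i, ε j • v j⟫ = -α} ≤ Δ := by
  classical
  set m₀ : ℕ := ⌈(1-α)/α^2⌉₊ + 1 with hm₀
  set L : ℕ := ⌈1/α⌉₊ + 2 with hL
  set t₀ : ℕ := m₀*m₀ + 2*m₀ with ht₀
  have hm₀R : (1-α)/α^2 + 1 ≤ (m₀ : ℝ) := by
    rw [hm₀]; push_cast
    have := Nat.le_ceil ((1-α)/α^2)
    linarith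
  obtain ⟨R, hR⟩ := ramsey_exists t₀ L
  refine ⟨R, ?_⟩
  intro d n v hunit hpm
  -- a reusable fact: no family of unit vectors pairwise at inner product -α has L members
  have hnegclique : ∀ (u : Fin n → EuclideanSpace ℝ (Fin d)) (K : Finset (Fin n)),
      (∀ j, ‖u j‖ = 1) → (∀ j ∈ K, ∀ k ∈ K, j ≠ k → ⟪u j, u k⟫ = -α) → ¬ (L ≤ K.card) := by
    intro u K hu hK hle
    have h1 := neg_clique hα0 u K (fun j _ => hu j) hK
    have hc1 : (L:ℝ) ≤ (K.card:ℝ) := Nat.cast_le.mpr hle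
    have hLr : (L:ℝ) = (⌈1/α⌉₊:ℝ) + 2 := by rw [hL]; push_cast; ring
    have h2 : 1/α ≤ (⌈1/α⌉₊:ℝ) := Nat.le_ceil _
    have h4 : (1/α) * α = 1 := by field_simp
    nlinarith
  by_cases hn : n ≤ R
  · refine ⟨fun _ => 1, fun _ => Or.inl rfl, ?_⟩
    intro i
    have h1 : Nat.card {j : Fin n // j ≠ i ∧ ⟪(1:ℝ) • v i, (1:ℝ) • v j⟫ = -α} ≤ n := by
      rw [Nat.card_eq_fintype_card]
      calc Fintype.card {j : Fin n // j ≠ i ∧ ⟪(1:ℝ) • v i, (1:ℝ) • v j⟫ = -α}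
          ≤ Fintype.card (Fin n) := Fintype.card_subtype_le _
      _ = n := Fintype.card_fin n
    exact le_trans h1 hn
  · push_neg at hn
    have hRuniv : R ≤ (univ : Finset (Fin n)).card := by
      simp only [card_univ, Fintype.card_fin]; omega
    rcases hR (fun j k => ⟪v j, v k⟫ = α)
        (fun a b hab => by
          show ⟪v b, v a⟫ = α
          rw [real_inner_comm]; exact hab) univ hRuniv with
      ⟨C, _, hCcard, hCpos⟩ | ⟨K, _, hKcard, hKneg⟩
    swap
    · exfalso
      refine hnegclique v K hunit ?_ hKcard
      intro j hj k hk hjk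
      rcases hpm j k hjk with h | h
      · exact absurd h (hKneg j hj k hk hjk)
      · exact h
    · set ε : Fin n → ℝ := fun i => if (C.filter (fun w => w ≠ i ∧ ⟪v i, v w⟫ = -α)).card ≤
          (C.filter (fun w => w ≠ i ∧ ⟪v i, v w⟫ = α)).card then 1 else -1 with hε
      have hεpm : ∀ i, ε i = 1 ∨ ε i = -1 := by
        intro i
        rw [hε]
        dsimp only
        split
        · exact Or.inl rfl
        · exact Or.inr rfl
      refine ⟨ε, hεpm, ?_⟩
      intro i
      set u : Fin n → EuclideanSpace ℝ (Fin d) := fun j => ε j • v j with hu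
      show Nat.card {j : Fin n // j ≠ i ∧ ⟪u i, u j⟫ = -α} ≤ R
      have hεunit : ∀ j, ‖u j‖ = 1 := by
        intro j
        rw [hu]
        rcases hεpm j with h | h <;> simp [h, norm_smul, hunit j]
      have hinner : ∀ j k, ⟪u j, u k⟫ = ε j * (ε k * ⟪v j, v k⟫) := by
        intro j k
        simp only [hu]
        rw [real_inner_smul_left, real_inner_smul_right]
      have hupm : ∀ j k, j ≠ k → ⟪u j, u k⟫ = α ∨ ⟪u j, u k⟫ = -α := by
        intro j k hjk
        rcases hεpm j with h1 | h1 <;> rcases hεpm k with h2 | h2 <;>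
          rcases hpm j k hjk with h3 | h3 <;>
          [ (left; rw [hinner, h1, h2, h3]; ring);
            (right; rw [hinner, h1, h2, h3]; ring);
            (right; rw [hinner, h1, h2, h3]; ring);
            (left; rw [hinner, h1, h2, h3]; ring);
            (right; rw [hinner, h1, h2, h3]; ring);
            (left; rw [hinner, h1, h2, h3]; ring);
            (left; rw [hinner, h1, h2, h3]; ring);
            (right; rw [hinner, h1, h2, h3]; ring) ]
      have hC1 : ∀ w ∈ C, ε w = 1 := by
        intro w hw
        rw [hε]
        dsimp only
        rw [if_pos]
        have hemp : C.filter (fun w' => w' ≠ w ∧ ⟪v w, v w'⟫ = -α) = ∅ := by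
          rw [Finset.filter_eq_empty_iff]
          rintro w' hw' ⟨hne, heq⟩
          have := hCpos w hw w' hw' (Ne.symm hne)
          rw [this] at heq
          linarith
        rw [hemp]
        simp
      have huw : ∀ w ∈ C, u w = v w := by
        intro w hw
        rw [hu]
        simp [hC1 w hw]
      have hCpair : ∀ w ∈ C, ∀ w' ∈ C, w ≠ w' → ⟪u w, u w'⟫ = α := by
        intro w hw w' hw' hne
        rw [huw w hw, huw w' hw']
        exact hCpos w hw w' hw' hne
      set Af : Fin n → Finset (Fin n) :=
        fun j => C.filter (fun w => w ≠ j ∧ ⟪u j, u w⟫ = -α) with hAf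
      set Bf : Fin n → Finset (Fin n) :=
        fun j => C.filter (fun w => w ≠ j ∧ ⟪u j, u w⟫ = α) with hBf
      have hmaj : ∀ j, (Af j).card ≤ (Bf j).card := by
        intro j
        by_cases hjC : j ∈ C
        · have : Af j = ∅ := by
            rw [hAf]
            dsimp only
            rw [Finset.filter_eq_empty_iff]
            rintro w hw ⟨hne, heq⟩
            have := hCpair j hjC w hw (Ne.symm hne)
            rw [this] at heq
            linarith
          rw [this]
          simp
        · by_cases hcond : (C.filter (fun w => w ≠ j ∧ ⟪v j, v w⟫ = -α)).card ≤
              (C.filter (fun w => w ≠ j ∧ ⟪v j, v w⟫ = α)).card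
          · have hεj : ε j = 1 := by rw [hε]; exact if_pos hcond
            have eA : Af j = C.filter (fun w => w ≠ j ∧ ⟪v j, v w⟫ = -α) := by
              rw [hAf]
              dsimp only
              apply Finset.filter_congr
              intro w hw
              rw [hinner j w, hεj, hC1 w hw]
              simp
            have eB : Bf j = C.filter (fun w => w ≠ j ∧ ⟪v j, v w⟫ = α) := by
              rw [hBf]
              dsimp only
              apply Finset.filter_congr
              intro w hw
              rw [hinner j w, hεj, hC1 w hw]
              simp
            rw [eA, eB]
            exact hcond
          · have hεj : ε j = -1 := by rw [hε]; exact if_neg hcond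
            have eA : Af j = C.filter (fun w => w ≠ j ∧ ⟪v j, v w⟫ = α) := by
              rw [hAf]
              dsimp only
              apply Finset.filter_congr
              intro w hw
              rw [hinner j w, hεj, hC1 w hw]
              constructor
              · rintro ⟨hne, heq⟩
                exact ⟨hne, by nlinarith [heq]⟩
              · rintro ⟨hne, heq⟩
                exact ⟨hne, by rw [heq]; ring⟩
            have eB : Bf j = C.filter (fun w => w ≠ j ∧ ⟪v j, v w⟫ = -α) := by
              rw [hBf]
              dsimp only
              apply Finset.filter_congr
              intro w hw
              rw [hinner j w, hεj, hC1 w hw]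
              constructor
              · rintro ⟨hne, heq⟩
                exact ⟨hne, by nlinarith [heq]⟩
              · rintro ⟨hne, heq⟩
                exact ⟨hne, by rw [heq]; ring⟩
            rw [eA, eB]
            exact le_of_lt (not_le.mp hcond)
      have hdisjAf : ∀ j, Disjoint (Af j) (Bf j) := by
        intro j
        rw [Finset.disjoint_left]
        intro w hwA hwB
        have e1 := (Finset.mem_filter.mp hwA).2.2
        have e2 := (Finset.mem_filter.mp hwB).2.2
        rw [e1] at e2
        linarith
      have hbnd : ∀ j, (Af j).card < m₀ := by
        intro j
        by_contra hc
        push_neg at hc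
        have hBc : m₀ ≤ (Bf j).card := le_trans hc (hmaj j)
        refine star_contra hα0 hα1 (u j) u (Af j) (Bf j) (hεunit j)
          (fun k _ => hεunit k) (fun k _ => hεunit k) ?_ ?_ ?_ ?_ ?_ ?_ ?_
        · exact fun k hk => (Finset.mem_filter.mp hk).2.2
        · exact fun k hk => (Finset.mem_filter.mp hk).2.2
        · intro k hk k' hk' hne
          exact hCpair k (Finset.mem_of_mem_filter _ hk) k' (Finset.mem_of_mem_filter _ hk') hne
        · intro k hk k' hk' hne
          exact hCpair k (Finset.mem_of_mem_filter _ hk) k' (Finset.mem_of_mem_filter _ hk') hne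
        · intro k hk k' hk'
          have hne : k ≠ k' := by
            rintro rfl
            exact (Finset.disjoint_left.mp (hdisjAf j)) hk hk'
          exact hCpair k (Finset.mem_of_mem_filter _ hk) k' (Finset.mem_of_mem_filter _ hk') hne
        · exact le_trans hm₀R (Nat.cast_le.mpr hc)
        · exact le_trans hm₀R (Nat.cast_le.mpr hBc)
      -- final counting
      have hconv : Nat.card {j : Fin n // j ≠ i ∧ ⟪u i, u j⟫ = -α} =
          (univ.filter (fun j : Fin n => j ≠ i ∧ ⟪u i, u j⟫ = -α)).card := by
        rw [Nat.card_eq_fintype_card, Fintype.card_subtype]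
      rw [hconv]
      by_contra hbig
      push_neg at hbig
      set Nf := univ.filter (fun j : Fin n => j ≠ i ∧ ⟪u i, u j⟫ = -α) with hNf
      have hNfcard : R ≤ Nf.card := hbig.le
      rcases hR (fun j k => ⟪u j, u k⟫ = α)
          (fun a b hab => by
            show ⟪u b, u a⟫ = α
            rw [real_inner_comm]; exact hab) Nf hNfcard with
        ⟨K', hK'sub, hK'card, hK'pos⟩ | ⟨K, hKsub, hKcard, hKneg⟩
      swap
      · refine hnegclique u K hεunit ?_ hKcard
        intro j hj k hk hjk
        rcases hupm j k hjk with h | h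
        · exact absurd h (hKneg j hj k hk hjk)
        · exact h
      · have hm₀t₀ : m₀ ≤ t₀ := by
          rw [ht₀]
          calc m₀ ≤ 2*m₀ := by omega
          _ ≤ m₀*m₀ + 2*m₀ := Nat.le_add_left _ _
        obtain ⟨K, hKsub2, hKm₀⟩ := Finset.exists_subset_card_eq (le_trans hm₀t₀ hK'card)
        have hKNf : K ⊆ Nf := hKsub2.trans hK'sub
        set Bad := insert i (K ∪ Af i ∪ K.biUnion Af) with hBad
        set Bs := C \ Bad with hBs
        have hbiU : (K.biUnion Af).card ≤ m₀ * (m₀ - 1) := by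
          calc (K.biUnion Af).card ≤ ∑ j ∈ K, (Af j).card := Finset.card_biUnion_le
          _ ≤ ∑ _j ∈ K, (m₀ - 1) := Finset.sum_le_sum (fun j _ => by have := hbnd j; omega)
          _ = K.card * (m₀ - 1) := by rw [Finset.sum_const, smul_eq_mul]
          _ = m₀ * (m₀ - 1) := by rw [hKm₀]
        have hBadcard : Bad.card ≤ 1 + (m₀ + ((m₀ - 1) + m₀ * (m₀ - 1))) := by
          calc Bad.card ≤ (K ∪ Af i ∪ K.biUnion Af).card + 1 := Finset.card_insert_le _ _
          _ ≤ (K ∪ Af i).card + (K.biUnion Af).card + 1 := by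
              have := Finset.card_union_le (K ∪ Af i) (K.biUnion Af)
              omega
          _ ≤ K.card + (Af i).card + (K.biUnion Af).card + 1 := by
              have := Finset.card_union_le K (Af i)
              omega
          _ ≤ 1 + (m₀ + ((m₀ - 1) + m₀ * (m₀ - 1))) := by
              have h1 := hbnd i
              omega
        have hmul : m₀ * (m₀ - 1) + m₀ = m₀ * m₀ := by
          obtain ⟨k, hk⟩ : ∃ k, m₀ = k + 1 := ⟨m₀ - 1, by omega⟩
          rw [hk]
          simp only [Nat.add_sub_cancel]
          ring
        have hBscard : m₀ ≤ Bs.card := by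
          have h1 : C.card - Bad.card ≤ Bs.card := Finset.le_card_sdiff Bad C
          have hCc : t₀ ≤ C.card := hCcard
          omega
        refine star_contra hα0 hα1 (u i) u K Bs (hεunit i)
          (fun k _ => hεunit k) (fun k _ => hεunit k) ?_ ?_ ?_ ?_ ?_ ?_ ?_
        · intro j hj
          exact (Finset.mem_filter.mp (hKNf hj)).2.2
        · intro w hw
          obtain ⟨hwC, hwBad⟩ := Finset.mem_sdiff.mp hw
          have hwi : w ≠ i := by
            rintro rfl
            exact hwBad (Finset.mem_insert_self _ _)
          rcases hupm i w (Ne.symm hwi) with h | h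
          · exact h
          · exfalso
            apply hwBad
            apply Finset.mem_insert_of_mem
            apply Finset.mem_union_left
            apply Finset.mem_union_right
            exact Finset.mem_filter.mpr ⟨hwC, hwi, h⟩
        · intro j hj k hk hjk
          exact hK'pos j (hKsub2 hj) k (hKsub2 hk) hjk
        · intro w hw w' hw' hne
          exact hCpair w (Finset.mem_sdiff.mp hw).1 w' (Finset.mem_sdiff.mp hw').1 hne
        · intro j hj w hw
          obtain ⟨hwC, hwBad⟩ := Finset.mem_sdiff.mp hw
          have hwj : w ≠ j := by
            rintro rfl
            exact hwBad (Finset.mem_insert_of_mem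
              (Finset.mem_union_left _ (Finset.mem_union_left _ hj)))
          rcases hupm j w (Ne.symm hwj) with h | h
          · exact h
          · exfalso
            exact hwBad (Finset.mem_insert_of_mem (Finset.mem_union_right _
              (Finset.mem_biUnion.mpr ⟨j, hj, Finset.mem_filter.mpr ⟨hwC, hwj, h⟩⟩)))
        · rw [hKm₀]
          exact hm₀R
        · exact le_trans hm₀R (Nat.cast_le.mpr hBscard)
end

section
/- For every positive integer r, every connected finite simple graph G on n vertices contains an r-net of size at most ⌈n/(r+1)⌉. -/
private lemma walk_split {V : Type*} {G : SimpleGraph V} {a b : V} (p : G.Walk a b) :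
    ∀ j ≤ p.length, ∃ (u : V) (q : G.Walk a u) (s : G.Walk u b),
      q.length = j ∧ s.length + j = p.length := by
  induction p with
  | nil =>
    intro j hj
    simp only [SimpleGraph.Walk.length_nil, Nat.le_zero] at hj
    exact ⟨_, .nil, .nil, by simp only [SimpleGraph.Walk.length_nil]; omega, by simp; omega⟩
  | cons h p ih =>
    intro j hj
    cases j with
    | zero => exact ⟨_, .nil, .cons h p, rfl, by simp⟩
    | succ j' =>
      obtain ⟨u, q, s, hq, hs⟩ := ih j' (by simpa using Nat.succ_le_succ_iff.mp hj)
      exact ⟨u, .cons h q, s, by simp [hq], by simp [hs]; omega⟩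

/-- **Finding a small net.** For every positive integer `r`, every connected graph on
`n` vertices has an `r`-net (a set of vertices such that every vertex of the graph is
within distance `r` of some vertex of the set) of size at most `⌈n/(r+1)⌉`. -/
theorem small_net_exists (r n : ℕ) (hr : 1 ≤ r) (G : SimpleGraph (Fin n))
    (hconn : G.Connected) :
    ∃ S : Finset (Fin n),
      (∀ v : Fin n, ∃ u ∈ S, ∃ p : G.Walk u v, p.length ≤ r) ∧
      S.card ≤ ⌈(n : ℝ) / (r + 1)⌉₊ := by
  obtain ⟨v0⟩ := hconn.nonempty
  set C : ℕ → Finset (Fin n) :=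
    fun t => Finset.univ.filter (fun v => G.dist v0 v % (r + 1) = t) with hC
  -- the classes partition the vertex set
  have hsum : ∑ t ∈ Finset.range (r + 1), (C t).card = n := by
    have := Finset.card_eq_sum_card_fiberwise
      (f := fun v : Fin n => G.dist v0 v % (r + 1)) (s := Finset.univ)
      (t := Finset.range (r + 1))
      (fun v _ => Finset.mem_range.2 (Nat.mod_lt _ (by omega)))
    simpa [hC] using this.symm
  -- coverage: for every t ≤ r, the set C t ∪ {v0} is an r-net
  have cover : ∀ t ≤ r, ∀ v : Fin n, ∃ u ∈ C t ∪ {v0}, ∃ p : G.Walk u v, p.length ≤ r := by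
    intro t ht v
    by_cases hd : G.dist v0 v < t
    · refine ⟨v0, by simp, ?_⟩
      obtain ⟨p, hp⟩ := hconn.exists_walk_length_eq_dist v0 v
      exact ⟨p, by omega⟩
    · push_neg at hd
      obtain ⟨p, hp⟩ := hconn.exists_walk_length_eq_dist v0 v
      set dv := G.dist v0 v with hdv
      set m := (dv - t) % (r + 1) with hm
      have hm1 : m ≤ dv - t := Nat.mod_le _ _
      have hm2 : m < r + 1 := Nat.mod_lt _ (by omega)
      obtain ⟨u, q, s, hq, hs⟩ := walk_split p (dv - m) (by omega)
      have h1 : G.dist v0 u ≤ dv - m := hq ▸ SimpleGraph.dist_le q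
      have h2 : G.dist u v ≤ m := by
        have : s.length = m := by omega
        exact this ▸ SimpleGraph.dist_le s
      have h3 : dv ≤ G.dist v0 u + G.dist u v := hconn.dist_triangle
      have hju : G.dist v0 u = dv - m := by omega
      refine ⟨u, ?_, ?_⟩
      · apply Finset.mem_union_left
        simp only [hC, Finset.mem_filter, Finset.mem_univ, true_and]
        rw [hju]
        have hdk := Nat.div_add_mod (dv - t) (r + 1)
        set k := (dv - t) / (r + 1) with hk
        have : dv - m = t + (r + 1) * k := by omega
        rw [this, Nat.add_mul_mod_self_left, Nat.mod_eq_of_lt (by omega)]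
      · obtain ⟨p', hp'⟩ := hconn.exists_walk_length_eq_dist u v
        exact ⟨p', by omega⟩
  -- pick the smallest class
  obtain ⟨t₀, ht₀mem, ht₀min⟩ := Finset.exists_min_image (Finset.range (r + 1))
    (fun t => (C t).card) ⟨0, Finset.mem_range.2 (by omega)⟩
  have ht₀r : t₀ ≤ r := by have := Finset.mem_range.1 ht₀mem; omega
  have hv00 : v0 ∈ C 0 := by simp [hC, SimpleGraph.dist_self]
  by_cases hc : (C 0).card ≤ (C t₀).card
  · -- class 0 is minimum: take S = C 0
    refine ⟨C 0 ∪ {v0}, cover 0 (by omega), ?_⟩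
    have hSeq : C 0 ∪ {v0} = C 0 := Finset.union_eq_left.2 (by simpa using hv00)
    rw [hSeq]
    have hmin : ∀ t ∈ Finset.range (r + 1), (C 0).card ≤ (C t).card :=
      fun t htm => hc.trans (ht₀min t htm)
    have hbound : (r + 1) * (C 0).card ≤ n := by
      calc (r + 1) * (C 0).card = ∑ _t ∈ Finset.range (r + 1), (C 0).card := by
            rw [Finset.sum_const, Finset.card_range]; ring
        _ ≤ ∑ t ∈ Finset.range (r + 1), (C t).card := Finset.sum_le_sum hmin
        _ = n := hsum
    have hb' : (C 0).card * (r + 1) ≤ n := by rw [Nat.mul_comm] at hbound; exact hbound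
    have hreal : ((C 0).card : ℝ) ≤ (n : ℝ) / (r + 1) := by
      rw [le_div_iff₀ (by positivity)]
      exact_mod_cast hb'
    exact_mod_cast hreal.trans (Nat.le_ceil _)
  · -- class t₀ is strictly smaller than class 0
    push_neg at hc
    refine ⟨C t₀ ∪ {v0}, cover t₀ ht₀r, ?_⟩
    have hcard : (C t₀ ∪ {v0}).card ≤ (C t₀).card + 1 := by
      apply (Finset.card_union_le _ _).trans
      simp
    have hstrict : (r + 1) * (C t₀).card < n := by
      calc (r + 1) * (C t₀).card = ∑ _t ∈ Finset.range (r + 1), (C t₀).card := by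
            rw [Finset.sum_const, Finset.card_range]; ring
        _ < ∑ t ∈ Finset.range (r + 1), (C t).card := by
            refine Finset.sum_lt_sum (fun t htm => ht₀min t htm) ?_
            exact ⟨0, Finset.mem_range.2 (by omega), hc⟩
        _ = n := hsum
    have hlt : ((C t₀).card : ℝ) < (n : ℝ) / (r + 1) := by
      rw [lt_div_iff₀ (by positivity)]
      rw [Nat.mul_comm] at hstrict
      exact_mod_cast hstrict
    have : (C t₀).card < ⌈(n : ℝ) / (r + 1)⌉₊ := Nat.lt_ceil.2 hlt
    omega
end

section
/- Let r be a positive integer, let G be a finite simple graph with no isolated vertices, and let H be the (nonempty) induced subgraph of G obtained by deleting the vertices of an r-net of G. Then λ_1(H)^{2r} ≤ λ_1(G)^{2r} − 1, where λ_1 denotes the largest eigenvalue of the adjacency matrix. -/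
open Matrix

attribute [local instance] Classical.propDecidable

/-- The adjacency matrix of a finite simple graph, with real entries. -/
noncomputable def adjMat {V : Type*} [Fintype V] (G : SimpleGraph V) : Matrix V V ℝ :=
  Matrix.of fun a b => if G.Adj a b then 1 else 0

lemma adjMat_isHermitian {V : Type*} [Fintype V] (G : SimpleGraph V) :
    (adjMat G).IsHermitian := by
  show (adjMat G)ᴴ = adjMat G
  ext i j
  simp only [adjMat, Matrix.conjTranspose_apply, Matrix.of_apply, star_trivial]
  rw [SimpleGraph.adj_comm]

/-- The `k`-th largest eigenvalue (`1`-indexed, counted with multiplicity) of the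
adjacency matrix of a finite simple graph. -/
noncomputable def graphEigNth {V : Type*} [Fintype V] (G : SimpleGraph V) (k : ℕ) : ℝ :=
  ((Finset.univ.val.map (adjMat_isHermitian G).eigenvalues).sort (· ≤ ·)).getD
    (Fintype.card V - k) 0

/-!
Let `v` be a unit eigenvector of `A_H` for `λ₁(H)`. Every walk in `H` is a walk in `G`, and
every vertex `w ∉ S` also has a closed walk of length `2r` in `G` through a vertex of `S` (go to
a net vertex within distance `r` and back, padding by bouncing along an edge at `w`). Counting
walks, this gives `A_H^{2r} + I ≤ A_G^{2r}` entrywise on `V ∖ S`. With `x` the extension of `|v|`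
by zero, `λ₁(H)^{2r} + 1 ≤ ⟨|v|, (A_H^{2r} + I) |v|⟩ ≤ ⟨x, A_G^{2r} x⟩ ≤ λ₁(G)^{2r}`, the last
step because a nonnegative symmetric matrix satisfies `|λᵢ| ≤ λ₁`, so that `λ₁^{2r}` bounds the
spectrum of `A_G^{2r}`.
-/

namespace Matrix

variable {n m R : Type*} [Fintype n] [Fintype m]

lemma pow_mulVec_eq_smul [CommSemiring R] [DecidableEq n] {A : Matrix n n R} {v : n → R} {μ : R}
    (h : A *ᵥ v = μ • v) (k : ℕ) : A ^ k *ᵥ v = μ ^ k • v := by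
  induction k with
  | zero => simp
  | succ k ih => rw [pow_succ, ← mulVec_mulVec, h, mulVec_smul, ih, smul_smul, ← pow_succ']

lemma dotProduct_submatrix_mulVec [NonUnitalNonAssocSemiring R] {f : m → n}
    (hf : Function.Injective f) (A : Matrix n n R) (y : m → R) :
    y ⬝ᵥ (A.submatrix f f *ᵥ y) =
      Function.extend f y 0 ⬝ᵥ (A *ᵥ Function.extend f y 0) := by
  have hzero : ∀ a ∉ Set.range f, Function.extend f y 0 a = 0 := fun a ha =>
    Function.extend_apply' _ _ _ (by simpa using ha)
  simp only [dotProduct, mulVec, submatrix_apply]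
  refine Fintype.sum_of_injective f hf _ _ (fun a ha => by simp [hzero a ha]) fun i => ?_
  rw [hf.extend_apply]
  congr 1
  refine Fintype.sum_of_injective f hf _ _ (fun a ha => by simp [hzero a ha]) fun j => ?_
  rw [hf.extend_apply]

lemma abs_dotProduct_mulVec_le {M : Matrix n n ℝ} (hM : ∀ i j, 0 ≤ M i j) (x : n → ℝ) :
    |x ⬝ᵥ (M *ᵥ x)| ≤ |x| ⬝ᵥ (M *ᵥ |x|) := by
  simp only [dotProduct, mulVec, Finset.mul_sum, Pi.abs_apply]
  refine (Finset.abs_sum_le_sum_abs _ _).trans (Finset.sum_le_sum fun i _ => ?_)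
  refine (Finset.abs_sum_le_sum_abs _ _).trans (le_of_eq (Finset.sum_congr rfl fun j _ => ?_))
  rw [abs_mul, abs_mul, abs_of_nonneg (hM i j)]

lemma abs_dotProduct_abs (x : n → ℝ) : |x| ⬝ᵥ |x| = x ⬝ᵥ x := by
  simp only [dotProduct, Pi.abs_apply, abs_mul_abs_self]

lemma dotProduct_mulVec_mono {M N : Matrix n n ℝ} (hMN : ∀ i j, M i j ≤ N i j) {x : n → ℝ}
    (hx : 0 ≤ x) : x ⬝ᵥ (M *ᵥ x) ≤ x ⬝ᵥ (N *ᵥ x) := by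
  simp only [dotProduct, mulVec]
  gcongr with i _ j _
  · exact hx i
  · exact hx j
  · exact hMN i j

namespace IsHermitian

variable [DecidableEq n] {A : Matrix n n ℝ}

lemma dotProduct_eigenvectorBasis_self (hA : A.IsHermitian) (i : n) :
    ⇑(hA.eigenvectorBasis i) ⬝ᵥ ⇑(hA.eigenvectorBasis i) = 1 := by
  have h := real_inner_self_eq_norm_sq (hA.eigenvectorBasis i)
  rwa [hA.eigenvectorBasis.orthonormal.1 i, EuclideanSpace.inner_eq_star_dotProduct, star_trivial,
    one_pow] at h

lemma dotProduct_mulVec_pow_le (hA : A.IsHermitian) {k : ℕ} {c : ℝ}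
    (hc : ∀ i, hA.eigenvalues i ^ k ≤ c) (x : n → ℝ) : x ⬝ᵥ (A ^ k *ᵥ x) ≤ c * (x ⬝ᵥ x) := by
  -- `c • 1 - A ^ k` is unitarily conjugate to the diagonal matrix with entries `c - λᵢ ^ k`.
  have hpsd : (c • 1 - A ^ k).PosSemidef := by
    conv => enter [1, 2, 1]; rw [hA.spectral_theorem]
    rw [← map_pow, ← map_one (Unitary.conjStarAlgAut ℝ _ hA.eigenvectorUnitary), ← map_smul,
      ← map_sub, Unitary.conjStarAlgAut_apply,
      Unitary.isUnit_coe.posSemidef_star_right_conjugate_iff, diagonal_pow, smul_one_eq_diagonal,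
      diagonal_sub, posSemidef_diagonal_iff]
    exact fun i => sub_nonneg.mpr (hc i)
  have := hpsd.dotProduct_mulVec_nonneg x
  rwa [star_trivial, sub_mulVec, dotProduct_sub, smul_mulVec, one_mulVec, dotProduct_smul,
    smul_eq_mul, sub_nonneg] at this

lemma abs_eigenvalues_le (hA : A.IsHermitian) (hA₀ : ∀ i j, 0 ≤ A i j) {c : ℝ}
    (hc : ∀ i, hA.eigenvalues i ≤ c) (i : n) : |hA.eigenvalues i| ≤ c := by
  set u := ⇑(hA.eigenvectorBasis i)
  have hu : u ⬝ᵥ u = 1 := hA.dotProduct_eigenvectorBasis_self i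
  calc |hA.eigenvalues i| = |u ⬝ᵥ (A *ᵥ u)| := by
        rw [hA.mulVec_eigenvectorBasis, dotProduct_smul, hu, smul_eq_mul, mul_one]
    _ ≤ |u| ⬝ᵥ (A *ᵥ |u|) := abs_dotProduct_mulVec_le hA₀ u
    _ ≤ c * (|u| ⬝ᵥ |u|) := by
        simpa using hA.dotProduct_mulVec_pow_le (k := 1) (by simpa using hc) |u|
    _ = c := by rw [abs_dotProduct_abs, hu, mul_one]

lemma eigenvalues_pow_add_one_le [DecidableEq m] {B : Matrix m m ℝ}
    (hA : A.IsHermitian) (hB : B.IsHermitian) {f : m → n} (hf : Function.Injective f) {k : ℕ}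
    (hBk : ∀ i j, 0 ≤ (B ^ k) i j) (hAB : ∀ i j, (B ^ k + 1) i j ≤ (A ^ k) (f i) (f j))
    {c : ℝ} (hc : ∀ i, hA.eigenvalues i ^ k ≤ c) (j : m) : hB.eigenvalues j ^ k + 1 ≤ c := by
  set v := ⇑(hB.eigenvectorBasis j)
  have hv : v ⬝ᵥ v = 1 := hB.dotProduct_eigenvectorBasis_self j
  have habs : |v| ⬝ᵥ |v| = 1 := (abs_dotProduct_abs v).trans hv
  set x := Function.extend f |v| 0
  have hx : x ⬝ᵥ x = 1 := by
    simpa [submatrix_one _ hf, habs] using (dotProduct_submatrix_mulVec hf 1 |v|).symm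
  calc hB.eigenvalues j ^ k + 1 = v ⬝ᵥ (B ^ k *ᵥ v) + |v| ⬝ᵥ |v| := by
        rw [pow_mulVec_eq_smul (hB.mulVec_eigenvectorBasis j), dotProduct_smul, hv, habs,
          smul_eq_mul, mul_one]
    _ ≤ |v| ⬝ᵥ (B ^ k *ᵥ |v|) + |v| ⬝ᵥ |v| := by
        gcongr
        exact (le_abs_self _).trans (abs_dotProduct_mulVec_le hBk v)
    _ = |v| ⬝ᵥ ((B ^ k + 1) *ᵥ |v|) := by rw [add_mulVec, dotProduct_add, one_mulVec]
    _ ≤ |v| ⬝ᵥ ((A ^ k).submatrix f f *ᵥ |v|) := dotProduct_mulVec_mono hAB (abs_nonneg v)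
    _ = x ⬝ᵥ (A ^ k *ᵥ x) := dotProduct_submatrix_mulVec hf _ _
    _ ≤ c := by simpa [hx] using hA.dotProduct_mulVec_pow_le hc x

end IsHermitian

end Matrix

lemma Multiset.isGreatest_sort_getD_card_sub_one {α : Type*} [LinearOrder α] {s : Multiset α}
    (hs : s ≠ 0) (d : α) : IsGreatest {a | a ∈ s} ((s.sort (· ≤ ·)).getD (card s - 1) d) := by
  have hk : card s - 1 < (s.sort (· ≤ ·)).length := by
    rw [length_sort]
    exact Nat.sub_one_lt (card_pos.mpr hs).ne'
  rw [List.getD_eq_getElem _ _ hk]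
  refine ⟨(mem_sort (· ≤ ·)).mp (List.getElem_mem hk), fun a ha => ?_⟩
  obtain ⟨j, hj, rfl⟩ := List.mem_iff_getElem.mp ((mem_sort (· ≤ ·)).mpr ha)
  exact (pairwise_sort s _).rel_get_of_le (a := ⟨j, hj⟩) (b := ⟨_, hk⟩)
    (Fin.mk_le_mk.mpr (by rw [length_sort] at hj; omega))

namespace SimpleGraph

variable {V W : Type*} {G : SimpleGraph V} {G' : SimpleGraph W}

lemma Walk.exists_closed_length_eq_two_mul {u w w' : V} (p : G.Walk u w) (h : G.Adj w w')
    {r : ℕ} (hp : p.length ≤ r) : ∃ q : G.Walk w w, q.length = 2 * r ∧ u ∈ q.support := by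
  obtain ⟨j, rfl⟩ := Nat.exists_eq_add_of_le hp
  induction j with
  | zero => exact ⟨p.reverse.append p, by simp [two_mul], by simp⟩
  | succ j ih =>
    obtain ⟨q, hq, hu⟩ := ih (by omega)
    exact ⟨.cons h (.cons h.symm q), by simp [hq]; ring, by simp [hu]⟩

section WalkCount

variable [DecidableEq V] [DecidableEq W] [G.LocallyFinite] [G'.LocallyFinite] {f : G →g G'}

lemma card_walk_length_le_of_injective (hf : Function.Injective f) (u v : V) (k : ℕ) :
    Fintype.card {p : G.Walk u v | p.length = k} ≤
      Fintype.card {p : G'.Walk (f u) (f v) | p.length = k} :=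
  Fintype.card_le_of_injective (fun p => ⟨p.1.map f, (Walk.length_map _ _).trans p.2⟩)
    fun _ _ h => Subtype.ext (Walk.map_injective_of_injective hf _ _ (congrArg Subtype.val h))

lemma card_walk_length_lt_of_injective (hf : Function.Injective f) {u v : V} {k : ℕ}
    (q : G'.Walk (f u) (f v)) (hq : q.length = k) (hq' : ∀ p : G.Walk u v, p.map f ≠ q) :
    Fintype.card {p : G.Walk u v | p.length = k} <
      Fintype.card {p : G'.Walk (f u) (f v) | p.length = k} :=
  Fintype.card_lt_of_injective_of_notMem
    (fun p => ⟨p.1.map f, (Walk.length_map _ _).trans p.2⟩)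
    (fun _ _ h => Subtype.ext (Walk.map_injective_of_injective hf _ _ (congrArg Subtype.val h)))
    (b := ⟨q, hq⟩) fun ⟨p, hp⟩ => hq' p.1 (congrArg Subtype.val hp)

end WalkCount

lemma adjMatrix_induce_pow_add_one_le [Fintype V] [DecidableEq V] [DecidableRel G.Adj]
    (s : Set V) [DecidablePred (· ∈ s)] [DecidableRel (G.induce s).Adj] {k : ℕ}
    (hclosed : ∀ w ∈ s, ∃ q : G.Walk w w, q.length = k ∧ ∃ u ∈ q.support, u ∉ s) (w w' : s) :
    ((G.induce s).adjMatrix ℝ ^ k + 1) w w' ≤ (G.adjMatrix ℝ ^ k) w w' := by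
  let f : G.induce s →g G := (Embedding.induce s).toHom
  have hf : Function.Injective f := Subtype.val_injective
  rw [Matrix.add_apply, adjMatrix_pow_apply_eq_card_walk, adjMatrix_pow_apply_eq_card_walk]
  obtain rfl | hne := eq_or_ne w w'
  · obtain ⟨q, hq, u, hu, hus⟩ := hclosed w w.2
    have hmiss : ∀ p : (G.induce s).Walk w w, p.map f ≠ q := by
      rintro p rfl
      obtain ⟨x, -, rfl⟩ := List.mem_map.mp ((Walk.support_map f p) ▸ hu)
      exact hus x.2
    rw [Matrix.one_apply_eq]
    exact_mod_cast card_walk_length_lt_of_injective hf q hq hmiss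
  · rw [Matrix.one_apply_ne hne, add_zero]
    exact_mod_cast card_walk_length_le_of_injective hf w w' k

end SimpleGraph

lemma adjMat_eq_adjMatrix {V : Type*} [Fintype V] (G : SimpleGraph V) [DecidableRel G.Adj] :
    adjMat G = G.adjMatrix ℝ := by
  ext a b
  simp [adjMat, SimpleGraph.adjMatrix_apply]

lemma adjMat_apply_nonneg {V : Type*} [Fintype V] (G : SimpleGraph V) (a b : V) :
    0 ≤ adjMat G a b := by
  simp only [adjMat, of_apply]
  split_ifs <;> norm_num

lemma adjMat_pow_apply_nonneg {V : Type*} [Fintype V] [DecidableEq V] (G : SimpleGraph V)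
    (k : ℕ) (a b : V) : 0 ≤ (adjMat G ^ k) a b := by
  rw [adjMat_eq_adjMatrix, SimpleGraph.adjMatrix_pow_apply_eq_card_walk]
  positivity

lemma isGreatest_graphEigNth_one {V : Type*} [Fintype V] [DecidableEq V] [Nonempty V]
    (G : SimpleGraph V) :
    IsGreatest (Set.range (adjMat_isHermitian G).eigenvalues) (graphEigNth G 1) := by
  -- `graphEigNth` is defined with classical decidable equality.
  obtain rfl : ‹DecidableEq V› = fun a b => Classical.propDecidable (a = b) :=
    Subsingleton.elim _ _
  obtain ⟨hmem, hmax⟩ := Multiset.isGreatest_sort_getD_card_sub_one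
    (s := Finset.univ.val.map (adjMat_isHermitian G).eigenvalues)
    (by simpa using Finset.univ_nonempty.ne_empty) 0
  rw [Multiset.card_map, Finset.card_val, Finset.card_univ] at hmem hmax
  exact ⟨Multiset.mem_map.mp hmem |>.imp fun _ h => h.2, fun _ ⟨i, hi⟩ => hmax (by simp [← hi])⟩

theorem net_removal_reduces_spectral_radius_general (r n : ℕ)
    (G : SimpleGraph (Fin n))
    (hnoiso : ∀ v : Fin n, ∃ w, G.Adj v w)
    (S : Finset (Fin n))
    (hnet : ∀ v : Fin n, ∃ u ∈ S, ∃ p : G.Walk u v, p.length ≤ r)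
    (hne : ∃ v : Fin n, v ∉ S) :
    graphEigNth (G.induce {v : Fin n | v ∉ S}) 1 ^ (2 * r) ≤
      graphEigNth G 1 ^ (2 * r) - 1 := by
  set s : Set (Fin n) := {v | v ∉ S}
  obtain ⟨v₀, hv₀⟩ := hne
  have : Nonempty s := ⟨⟨v₀, hv₀⟩⟩
  have : Nonempty (Fin n) := ⟨v₀⟩
  obtain ⟨⟨j, hj⟩, -⟩ := isGreatest_graphEigNth_one (G.induce s)
  have hG := (isGreatest_graphEigNth_one G).2
  have hclosed (w) (_ : w ∈ s) : ∃ q : G.Walk w w, q.length = 2 * r ∧ ∃ u ∈ q.support, u ∉ s := by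
    obtain ⟨u, huS, p, hp⟩ := hnet w
    obtain ⟨w', hw'⟩ := hnoiso w
    obtain ⟨q, hq, hu⟩ := p.exists_closed_length_eq_two_mul hw' hp
    exact ⟨q, hq, u, hu, not_not.mpr huS⟩
  have hc (i) : (adjMat_isHermitian G).eigenvalues i ^ (2 * r) ≤ graphEigNth G 1 ^ (2 * r) := by
    rw [← (even_two_mul r).pow_abs]
    refine pow_le_pow_left₀ (abs_nonneg _) ?_ _
    exact (adjMat_isHermitian G).abs_eigenvalues_le (adjMat_apply_nonneg G)
      (fun _ => hG ⟨_, rfl⟩) i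
  have hgap := (adjMat_isHermitian G).eigenvalues_pow_add_one_le
    (adjMat_isHermitian (G.induce s)) Subtype.val_injective (adjMat_pow_apply_nonneg _ _)
    (by simpa only [adjMat_eq_adjMatrix] using
      SimpleGraph.adjMatrix_induce_pow_add_one_le s hclosed) hc j
  rw [hj] at hgap
  linarith

/-- **Net removal reduces spectral radius.** Let `r ≥ 1`, let `G` be a graph with no
isolated vertices, and let `H` be the nonempty induced subgraph obtained by deleting
the vertices of an `r`-net `S` of `G` (every vertex of `G` is within distance `r` of
some vertex of `S`). Then `λ₁(H)^{2r} ≤ λ₁(G)^{2r} − 1`. -/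
theorem net_removal_reduces_spectral_radius (r n : ℕ) (hr : 1 ≤ r)
    (G : SimpleGraph (Fin n))
    (hnoiso : ∀ v : Fin n, ∃ w, G.Adj v w)
    (S : Finset (Fin n))
    (hnet : ∀ v : Fin n, ∃ u ∈ S, ∃ p : G.Walk u v, p.length ≤ r)
    (hne : ∃ v : Fin n, v ∉ S) :
    graphEigNth (G.induce {v : Fin n | v ∉ S}) 1 ^ (2 * r) ≤
      graphEigNth G 1 ^ (2 * r) - 1 :=
  net_removal_reduces_spectral_radius_general r n G hnoiso S hnet hne
end

section
/- For every real α with 0 < α < 1 there exists a positive integer M with the following property: for every d, there do not exist unit vectors u, a_1, …, a_M, b_1, …, b_M ∈ R^d such that all pairwise inner products among these vectors lie in {α, −α}, ⟨u, a_i⟩ = −α for all i, ⟨u, b_j⟩ = α for all j, and ⟨a_i, b_j⟩ = α for all i, j. -/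
open scoped RealInnerProductSpace

/-- **Forbidden configuration (type II).** For every `0 < α < 1` there is a positive
integer `M` such that in no dimension `d` can one find unit vectors
`u, a 1, …, a M, b 1, …, b M` with all pairwise inner products in `{α, -α}`,
where `⟪u, a i⟫ = -α` for all `i`, `⟪u, b j⟫ = α` for all `j`, and `⟪a i, b j⟫ = α`
for all `i, j`. -/
theorem forbidden_type_II (α : ℝ) (hα0 : 0 < α) (hα1 : α < 1) :
    ∃ M : ℕ, 0 < M ∧ ∀ d : ℕ,
      ¬ ∃ (u : EuclideanSpace ℝ (Fin d)) (a b : Fin M → EuclideanSpace ℝ (Fin d)),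
        ‖u‖ = 1 ∧ (∀ i, ‖a i‖ = 1) ∧ (∀ j, ‖b j‖ = 1) ∧
        (∀ i, ⟪u, a i⟫ = -α) ∧
        (∀ j, ⟪u, b j⟫ = α) ∧
        (∀ i j, ⟪a i, b j⟫ = α) ∧
        (∀ i j, i ≠ j → (⟪a i, a j⟫ = α ∨ ⟪a i, a j⟫ = -α)) ∧
        (∀ i j, i ≠ j → (⟪b i, b j⟫ = α ∨ ⟪b i, b j⟫ = -α)) := by
  obtain ⟨m, hm⟩ := exists_nat_ge ((α ^ 2)⁻¹)
  refine ⟨m + 1, Nat.succ_pos _, fun d => ?_⟩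
  rintro ⟨u, a, b, hu, ha, hb, hua, hub, hab, haa, hbb⟩
  set N : ℝ := ((m + 1 : ℕ) : ℝ) with hNdef
  have hN : (0 : ℝ) < N := by positivity
  have hNα : (1 : ℝ) ≤ N * α ^ 2 := by
    have h2 : (α ^ 2)⁻¹ ≤ N := le_trans hm (by rw [hNdef]; exact_mod_cast Nat.le_succ m)
    have hα2 : (0 : ℝ) < α ^ 2 := by positivity
    rw [inv_le_iff_one_le_mul₀ hα2] at h2
    linarith [h2]
  set v : EuclideanSpace ℝ (Fin d) := (∑ i, a i) - (∑ j, b j) with hv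
  have hcard : ∀ c : ℝ, (∑ _j : Fin (m + 1), c) = N * c := by
    intro c
    rw [Finset.sum_const, Finset.card_univ, Fintype.card_fin, nsmul_eq_mul, hNdef]
  -- the constant sum
  have hsum_ite : ∀ i : Fin (m + 1), (∑ j : Fin (m + 1), (if j = i then (1 : ℝ) else α))
      = 1 + (N - 1) * α := by
    intro i
    have h1 : ∀ j : Fin (m + 1), (if j = i then (1 : ℝ) else α)
        = α + (if j = i then (1 : ℝ) - α else 0) := by
      intro j; split <;> ring
    rw [Finset.sum_congr rfl (fun j _ => h1 j), Finset.sum_add_distrib,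
      Finset.sum_ite_eq' Finset.univ i (fun _ => (1 : ℝ) - α), hcard]
    simp only [Finset.mem_univ, if_true]
    ring
  -- row bounds for the Gram sums of a and b
  have rowa : ∀ i : Fin (m + 1), ∑ j, ⟪a i, a j⟫ ≤ 1 + (N - 1) * α := by
    intro i
    calc ∑ j, ⟪a i, a j⟫ ≤ ∑ j : Fin (m + 1), (if j = i then (1 : ℝ) else α) := by
          refine Finset.sum_le_sum fun j _ => ?_
          by_cases h : j = i
          · subst h
            simp only [if_pos rfl]
            rw [real_inner_self_eq_norm_sq, ha j]
            norm_num
          · simp only [if_neg h]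
            rcases haa i j (fun he => h he.symm) with h' | h' <;> rw [h'] <;> linarith
      _ = 1 + (N - 1) * α := hsum_ite i
  have rowb : ∀ i : Fin (m + 1), ∑ j, ⟪b i, b j⟫ ≤ 1 + (N - 1) * α := by
    intro i
    calc ∑ j, ⟪b i, b j⟫ ≤ ∑ j : Fin (m + 1), (if j = i then (1 : ℝ) else α) := by
          refine Finset.sum_le_sum fun j _ => ?_
          by_cases h : j = i
          · subst h
            simp only [if_pos rfl]
            rw [real_inner_self_eq_norm_sq, hb j]
            norm_num
          · simp only [if_neg h]
            rcases hbb i j (fun he => h he.symm) with h' | h' <;> rw [h'] <;> linarith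
      _ = 1 + (N - 1) * α := hsum_ite i
  have hav : ∀ i, ⟪a i, v⟫ ≤ 1 - α := by
    intro i
    have he : ⟪a i, v⟫ = (∑ j, ⟪a i, a j⟫) - ∑ j, ⟪a i, b j⟫ := by
      rw [hv, inner_sub_right, inner_sum, inner_sum]
    have h1 : (∑ j, ⟪a i, b j⟫ : ℝ) = N * α := by
      rw [Finset.sum_congr rfl (fun j _ => hab i j), hcard]
    rw [he, h1]
    have := rowa i
    linarith
  have hbv : ∀ j, α - 1 ≤ ⟪b j, v⟫ := by
    intro j
    have he : ⟪b j, v⟫ = (∑ i, ⟪b j, a i⟫) - ∑ k, ⟪b j, b k⟫ := by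
      rw [hv, inner_sub_right, inner_sum, inner_sum]
    have h1 : (∑ i, ⟪b j, a i⟫ : ℝ) = N * α := by
      have h2 : ∀ i : Fin (m + 1), ⟪b j, a i⟫ = α := fun i => by
        rw [real_inner_comm]; exact hab i j
      rw [Finset.sum_congr rfl (fun i _ => h2 i), hcard]
    rw [he, h1]
    have := rowb j
    linarith
  -- bound on ⟪v, v⟫
  have hvv : ⟪v, v⟫ ≤ 2 * N * (1 - α) := by
    have he : ⟪v, v⟫ = (∑ i, ⟪a i, v⟫) - ∑ j, ⟪b j, v⟫ := by
      rw [hv, inner_sub_left, sum_inner, sum_inner]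
    rw [he]
    have h1 : (∑ i, ⟪a i, v⟫ : ℝ) ≤ N * (1 - α) := by
      calc (∑ i, ⟪a i, v⟫ : ℝ) ≤ ∑ _i : Fin (m + 1), (1 - α) :=
            Finset.sum_le_sum fun i _ => hav i
        _ = N * (1 - α) := hcard _
    have h2 : N * (α - 1) ≤ (∑ j, ⟪b j, v⟫ : ℝ) := by
      calc N * (α - 1) = ∑ _j : Fin (m + 1), (α - 1) := (hcard _).symm
        _ ≤ ∑ j, ⟪b j, v⟫ := Finset.sum_le_sum fun j _ => hbv j
    linarith
  -- ⟪u, v⟫ = -2Nα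
  have huv : ⟪u, v⟫ = -(2 * N * α) := by
    rw [hv, inner_sub_right, inner_sum, inner_sum,
      Finset.sum_congr rfl (fun i _ => hua i),
      Finset.sum_congr rfl (fun j _ => hub j), hcard, hcard]
    ring
  -- Cauchy-Schwarz
  have huu : ⟪u, u⟫ = 1 := by rw [real_inner_self_eq_norm_sq, hu]; norm_num
  have hcs := real_inner_mul_inner_self_le u v
  rw [huv, huu, one_mul] at hcs
  nlinarith [hcs, hvv, hNα, hN, mul_pos hN hα0, sq_nonneg α]
end

section
/- Let 0 < α < 1, let v_1, …, v_n ∈ R^d be unit vectors with ⟨v_i, v_j⟩ = ±α for all i ≠ j, and let G be the graph on {1, …, n} with an edge ij whenever ⟨v_i, v_j⟩ = −α. Set λ = (1−α)/(2α). Then the adjacency matrix of G has at most one eigenvalue (counted with multiplicity) strictly greater than λ. -/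
open scoped RealInnerProductSpace

open Matrix

attribute [local instance] Classical.propDecidable

/-! The Gram matrix `(1 - α) I - 2α A + α J` of the vectors is positive semidefinite, and `J`
vanishes on the hyperplane `𝟙ᗮ`, so `xᵀ A x ≤ λ ‖x‖²` there. Eigenvectors of two eigenvalues above
`λ` would span a plane on which `xᵀ A x > λ ‖x‖²`, and a plane meets every hyperplane. -/

namespace Matrix

variable {ι : Type*} [Fintype ι] [DecidableEq ι]

lemma dotProduct_mulVec_le_of_posSemidef {A : Matrix ι ι ℝ} {w x : ι → ℝ} {a b c : ℝ}
    (hM : (a • 1 - b • A + c • vecMulVec w w).PosSemidef) (hb : 0 < b)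
    (hx : w ⬝ᵥ x = 0) : x ⬝ᵥ A *ᵥ x ≤ a / b * (x ⬝ᵥ x) := by
  have h := hM.dotProduct_mulVec_nonneg x
  simp only [star_trivial, add_mulVec, sub_mulVec, smul_mulVec, one_mulVec,
    vecMulVec_mulVec, hx, dotProduct_add, dotProduct_sub, dotProduct_smul, smul_eq_mul,
    MulOpposite.op_zero, zero_smul, dotProduct_zero, mul_zero, add_zero] at h
  rw [div_mul_eq_mul_div, le_div_iff₀ hb]
  linarith

lemma IsHermitian.dotProduct_eigenvectorBasis {A : Matrix ι ι ℝ} (hA : A.IsHermitian) (i j : ι) :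
    ⇑(hA.eigenvectorBasis i) ⬝ᵥ ⇑(hA.eigenvectorBasis j) = if i = j then 1 else 0 := by
  have h := orthonormal_iff_ite.mp hA.eigenvectorBasis.orthonormal j i
  rw [EuclideanSpace.inner_eq_star_dotProduct, star_trivial] at h
  convert h using 2
  exact eq_comm

theorem IsHermitian.card_eigenvalues_gt_le_one {A : Matrix ι ι ℝ} (hA : A.IsHermitian)
    (w : ι → ℝ) (c : ℝ)
    (h : ∀ x, w ⬝ᵥ x = 0 → x ⬝ᵥ A *ᵥ x ≤ c * (x ⬝ᵥ x)) :
    Nat.card {i // c < hA.eigenvalues i} ≤ 1 := by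
  rw [Finite.card_le_one_iff_subsingleton]
  refine ⟨fun ⟨i, hi⟩ ⟨j, hj⟩ => Subtype.ext ?_⟩
  by_contra hij
  set u := fun k => ⇑(hA.eigenvectorBasis k)
  obtain ⟨a, b, hab, hw⟩ : ∃ a b : ℝ, (a ≠ 0 ∨ b ≠ 0) ∧ w ⬝ᵥ (a • u i + b • u j) = 0 := by
    by_cases hi0 : w ⬝ᵥ u i = 0
    · exact ⟨1, 0, Or.inl one_ne_zero, by simp [hi0]⟩
    · exact ⟨w ⬝ᵥ u j, -(w ⬝ᵥ u i), Or.inr (neg_ne_zero.mpr hi0), by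
        simp only [dotProduct_add, dotProduct_smul, smul_eq_mul]; ring⟩
  have key := h _ hw
  simp only [mulVec_add, mulVec_smul, u, hA.mulVec_eigenvectorBasis, dotProduct_add,
    add_dotProduct, dotProduct_smul, smul_dotProduct, hA.dotProduct_eigenvectorBasis, hij,
    Ne.symm hij, if_true, if_false, smul_eq_mul] at key
  rcases hab with ha | hb
  · nlinarith [mul_self_pos.mpr ha, mul_self_nonneg b]
  · nlinarith [mul_self_pos.mpr hb, mul_self_nonneg a]

end Matrix

lemma gram_eq_of_equiangular {ι E : Type*} [Fintype ι] [DecidableEq ι]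
    [NormedAddCommGroup E] [InnerProductSpace ℝ E] {α : ℝ} {v : ι → E} {G : SimpleGraph ι}
    (hunit : ∀ i, ‖v i‖ = 1)
    (hangle : ∀ i j, i ≠ j → ⟪v i, v j⟫ = α ∨ ⟪v i, v j⟫ = -α)
    (hG : ∀ i j, G.Adj i j ↔ i ≠ j ∧ ⟪v i, v j⟫ = -α) :
    gram ℝ v = (1 - α) • 1 - (2 * α) • adjMat G + α • vecMulVec 1 1 := by
  ext i j
  simp only [gram_apply, adjMat, Matrix.add_apply, Matrix.sub_apply, Matrix.smul_apply,
    one_apply, of_apply, vecMulVec_apply, Pi.one_apply, smul_eq_mul]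
  by_cases hij : i = j
  · subst hij
    simp [hunit]
  · rw [if_neg hij]
    split_ifs with hadj
    · rw [((hG i j).1 hadj).2]; ring
    · rw [(hangle i j hij).resolve_right fun h => hadj ((hG i j).2 ⟨hij, h⟩)]; ring

theorem at_most_one_eigenvalue_above_general (α : ℝ) (hα0 : 0 < α)
    (n d : ℕ) (v : Fin n → EuclideanSpace ℝ (Fin d))
    (hunit : ∀ i, ‖v i‖ = 1)
    (hangle : ∀ i j, i ≠ j → ⟪v i, v j⟫ = α ∨ ⟪v i, v j⟫ = -α)
    (G : SimpleGraph (Fin n))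
    (hG : ∀ i j, G.Adj i j ↔ i ≠ j ∧ ⟪v i, v j⟫ = -α) :
    Nat.card {i : Fin n //
      (1 - α) / (2 * α) < (adjMat_isHermitian G).eigenvalues i} ≤ 1 := by
  have hgram := posSemidef_gram ℝ v
  rw [gram_eq_of_equiangular hunit hangle hG] at hgram
  exact (adjMat_isHermitian G).card_eigenvalues_gt_le_one 1 _ fun x hx =>
    dotProduct_mulVec_le_of_posSemidef hgram (by positivity) hx

/-- **At most one eigenvalue above `λ`.** Let `0 < α < 1`, let `v 1, …, v n` be unit
vectors in `ℝ^d` with pairwise inner products `±α`, and let `G` be the graph on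
`{1, …, n}` with an edge `ij` exactly when `⟪v i, v j⟫ = −α`. Then the adjacency matrix
of `G` has at most one eigenvalue (with multiplicity) strictly greater than
`λ = (1−α)/(2α)`. -/
theorem at_most_one_eigenvalue_above (α : ℝ) (hα0 : 0 < α) (hα1 : α < 1)
    (n d : ℕ) (v : Fin n → EuclideanSpace ℝ (Fin d))
    (hunit : ∀ i, ‖v i‖ = 1)
    (hangle : ∀ i j, i ≠ j → ⟪v i, v j⟫ = α ∨ ⟪v i, v j⟫ = -α)
    (G : SimpleGraph (Fin n))
    (hG : ∀ i j, G.Adj i j ↔ i ≠ j ∧ ⟪v i, v j⟫ = -α) :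
    Nat.card {i : Fin n //
      (1 - α) / (2 * α) < (adjMat_isHermitian G).eigenvalues i} ≤ 1 :=
  at_most_one_eigenvalue_above_general α hα0 n d v hunit hangle G hG
end

section
/- Let 0 < α < 1, let v_1, …, v_n ∈ R^d be unit vectors with ⟨v_i, v_j⟩ = ±α for all i ≠ j, and let G be the graph on {1, …, n} with an edge ij whenever ⟨v_i, v_j⟩ = −α. Set λ = (1−α)/(2α). Then n ≤ d + mult(λ, G) + 1, where mult(λ, G) is the multiplicity of λ as an eigenvalue of the adjacency matrix of G (zero if λ is not an eigenvalue). -/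
open scoped RealInnerProductSpace

open Matrix

attribute [local instance] Classical.propDecidable

/-- The multiplicity of `μ` as an eigenvalue of the adjacency matrix of a finite simple
graph (zero if `μ` is not an eigenvalue). -/
noncomputable def graphEigMult {V : Type*} [Fintype V] (G : SimpleGraph V) (μ : ℝ) : ℕ :=
  Nat.card {i : V // (adjMat_isHermitian G).eigenvalues i = μ}

/-!
The Gram matrix of the `v i` is `(1 - α) I - 2α A + α J`, with `A` the adjacency matrix of `G`
and `J` the all-ones matrix. So `-2α (A - λ I)` is a Gram matrix of rank at most `d` minus the
rank-one matrix `α J`, and has rank at most `d + 1`; as `A` is symmetric, the rank of `A - λ I`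
is `n - mult(λ, G)`.
-/

namespace Matrix

theorem rank_add_le {K m n : Type*} [Field K] [Fintype n] (A B : Matrix m n K) :
    (A + B).rank ≤ A.rank + B.rank := by
  have hrange : LinearMap.range (A + B).mulVecLin ≤
      LinearMap.range A.mulVecLin ⊔ LinearMap.range B.mulVecLin := by
    rintro _ ⟨x, rfl⟩
    rw [mulVecLin_add, LinearMap.add_apply]
    exact Submodule.add_mem_sup (LinearMap.mem_range_self _ x) (LinearMap.mem_range_self _ x)
  exact (Submodule.finrank_mono hrange).trans (Submodule.finrank_add_le_finrank_add_finrank _ _)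

theorem rank_gram_le_finrank {𝕜 E n : Type*} [RCLike 𝕜] [NormedAddCommGroup E]
    [InnerProductSpace 𝕜 E] [FiniteDimensional 𝕜 E] [Fintype n] (v : n → E) :
    (gram 𝕜 v).rank ≤ Module.finrank 𝕜 E := by
  rw [gram_eq_conjTranspose_mul (stdOrthonormalBasis 𝕜 E)]
  exact (rank_mul_le_right _ _).trans ((rank_le_card_height _).trans_eq (Fintype.card_fin _))

namespace IsHermitian

variable {𝕜 n : Type*} [RCLike 𝕜] [Fintype n] [DecidableEq n] {A : Matrix n n 𝕜}

theorem sub_smul_one_eq_conj_diagonal (hA : A.IsHermitian) (μ : ℝ) :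
    A - μ • (1 : Matrix n n 𝕜) = Unitary.conjStarAlgAut 𝕜 _ hA.eigenvectorUnitary
      (diagonal (RCLike.ofReal ∘ (hA.eigenvalues - fun _ => μ))) := by
  have hdiag : diagonal (RCLike.ofReal ∘ (hA.eigenvalues - fun _ => μ)) =
      diagonal (RCLike.ofReal ∘ hA.eigenvalues) - (μ : 𝕜) • (1 : Matrix n n 𝕜) := by
    ext i j
    by_cases h : i = j <;>
      simp [h, RCLike.real_smul_eq_coe_mul, RCLike.algebraMap_eq_ofReal]
  rw [hdiag, map_sub, map_smul, map_one, ← hA.spectral_theorem,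
    RCLike.real_smul_eq_coe_smul (K := 𝕜)]

theorem rank_sub_smul_one (hA : A.IsHermitian) (μ : ℝ) :
    (A - μ • (1 : Matrix n n 𝕜)).rank = Fintype.card {i // hA.eigenvalues i ≠ μ} := by
  rw [hA.sub_smul_one_eq_conj_diagonal, Unitary.conjStarAlgAut_apply, ← Unitary.coe_star]
  simp [-isUnit_iff_ne_zero, -Unitary.coe_star, rank_diagonal, sub_eq_zero]

end IsHermitian

end Matrix

theorem inner_eq_ite_adj {ι E : Type*} [NormedAddCommGroup E] [InnerProductSpace ℝ E]
    {α : ℝ} {v : ι → E} (hunit : ∀ i, ‖v i‖ = 1)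
    (hangle : ∀ i j, i ≠ j → ⟪v i, v j⟫ = α ∨ ⟪v i, v j⟫ = -α)
    {G : SimpleGraph ι} (hG : ∀ i j, G.Adj i j ↔ i ≠ j ∧ ⟪v i, v j⟫ = -α) (i j : ι) :
    ⟪v i, v j⟫ = if i = j then 1 else if G.Adj i j then -α else α := by
  by_cases hij : i = j
  · simp [hij, hunit]
  by_cases hadj : G.Adj i j
  · simp [hij, hadj, ((hG i j).1 hadj).2]
  · simp only [hij, hadj, if_false]
    exact (hangle i j hij).resolve_right fun h => hadj ((hG i j).2 ⟨hij, h⟩)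

theorem gram_eq_smul_one_sub_smul_adjMat_add_vecMulVec {ι E : Type*} [Fintype ι]
    [DecidableEq ι] [NormedAddCommGroup E] [InnerProductSpace ℝ E]
    {α : ℝ} {v : ι → E} (hunit : ∀ i, ‖v i‖ = 1)
    (hangle : ∀ i j, i ≠ j → ⟪v i, v j⟫ = α ∨ ⟪v i, v j⟫ = -α)
    {G : SimpleGraph ι} (hG : ∀ i j, G.Adj i j ↔ i ≠ j ∧ ⟪v i, v j⟫ = -α) :
    gram ℝ v = (1 - α) • 1 - (2 * α) • adjMat G + vecMulVec (fun _ => α) (fun _ => 1) := by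
  ext i j
  rw [gram_apply, inner_eq_ite_adj hunit hangle hG]
  by_cases hij : i = j
  · simp [hij, adjMat, vecMulVec_apply]
  by_cases hadj : G.Adj i j
  · simp [hij, hadj, adjMat, vecMulVec_apply]
    ring
  · simp [hij, hadj, adjMat, vecMulVec_apply]

theorem graphEigMult_add_rank_adjMat_sub_smul_one {V : Type*} [Fintype V] [DecidableEq V]
    (G : SimpleGraph V) (μ : ℝ) :
    graphEigMult G μ + (adjMat G - μ • 1).rank = Fintype.card V := by
  rw [(adjMat_isHermitian G).rank_sub_smul_one, Fintype.card_subtype_compl, graphEigMult,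
    Nat.card_eq_fintype_card]
  -- `graphEigMult` computes the eigenvalues with the classical `DecidableEq` instance
  convert Nat.add_sub_cancel' (Fintype.card_subtype_le _)

theorem equiangular_rank_nullity_bound_general (α : ℝ) (hα0 : 0 < α)
    (n d : ℕ) (v : Fin n → EuclideanSpace ℝ (Fin d))
    (hunit : ∀ i, ‖v i‖ = 1)
    (hangle : ∀ i j, i ≠ j → ⟪v i, v j⟫ = α ∨ ⟪v i, v j⟫ = -α)
    (G : SimpleGraph (Fin n))
    (hG : ∀ i j, G.Adj i j ↔ i ≠ j ∧ ⟪v i, v j⟫ = -α) :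
    n ≤ d + graphEigMult G ((1 - α) / (2 * α)) + 1 := by
  have hdecomp : adjMat G - ((1 - α) / (2 * α)) • 1 =
      (-(2 * α))⁻¹ • (gram ℝ v + vecMulVec (-fun _ => α) (fun _ => 1)) := by
    rw [gram_eq_smul_one_sub_smul_adjMat_add_vecMulVec hunit hangle hG, neg_vecMulVec]
    match_scalars <;> field_simp; ring
  have hrank : (adjMat G - ((1 - α) / (2 * α)) • 1).rank ≤ d + 1 := by
    rw [hdecomp, rank_smul_of_mem_nonZeroDivisors _
      (mem_nonZeroDivisors_of_ne_zero (inv_ne_zero (neg_ne_zero.2 (by positivity))))]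
    calc _ ≤ (gram ℝ v).rank + (vecMulVec (-fun _ => α) (fun _ => 1)).rank := rank_add_le _ _
      _ ≤ d + 1 := add_le_add ((rank_gram_le_finrank v).trans_eq finrank_euclideanSpace_fin)
          (rank_vecMulVec_le _ _)
  have hmult := graphEigMult_add_rank_adjMat_sub_smul_one G ((1 - α) / (2 * α))
  rw [Fintype.card_fin] at hmult
  omega

/-- **Rank–nullity bound.** Let `0 < α < 1`, let `v 1, …, v n` be unit vectors in `ℝ^d`
with pairwise inner products `±α`, and let `G` be the graph on `{1, …, n}` with an edge
`ij` exactly when `⟪v i, v j⟫ = −α`. Then `n ≤ d + mult(λ, G) + 1` where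
`λ = (1−α)/(2α)`. -/
theorem equiangular_rank_nullity_bound (α : ℝ) (hα0 : 0 < α) (hα1 : α < 1)
    (n d : ℕ) (v : Fin n → EuclideanSpace ℝ (Fin d))
    (hunit : ∀ i, ‖v i‖ = 1)
    (hangle : ∀ i j, i ≠ j → ⟪v i, v j⟫ = α ∨ ⟪v i, v j⟫ = -α)
    (G : SimpleGraph (Fin n))
    (hG : ∀ i j, G.Adj i j ↔ i ≠ j ∧ ⟪v i, v j⟫ = -α) :
    n ≤ d + graphEigMult G ((1 - α) / (2 * α)) + 1 :=
  equiangular_rank_nullity_bound_general α hα0 n d v hunit hangle G hG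
end

section
/- Let 0 < α < 1, let λ = (1−α)/(2α), and suppose the spectral radius order k = k(λ) is finite. Then for every d ≥ 2, N_α(d) ≥ ⌊k(d−1)/(k−1)⌋. -/
/-!
Let `G` be a graph on `k` vertices whose largest adjacency eigenvalue is `λ = (1 - α) / (2α)`,
and write `d - 1 = t (k - 1) + r` with `r < k - 1`. Let `H` be the disjoint union of `t` copies
of `G` and `r` isolated vertices, so `H` has `t k + r = ⌊k (d - 1) / (k - 1)⌋` vertices. The matrix
`M = 2α (λ I - A_H) + α J` has unit diagonal and off-diagonal entries `±α`. Since `λ` is the top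
eigenvalue of `G`, `λ I - A_G = CᵀC` with `C` having only `k - 1` rows; stacking these factors
block-diagonally, together with `√λ I` for the isolated vertices and a row `√α 𝟙` for `J`, gives
`M = EᵀE` where `E` has `t (k - 1) + r + 1 = d` rows. The columns of `E` are the required
equiangular unit vectors in `ℝ^d`. The supremum defining `N_α(d)` is finite because the tensor
squares `v i ⊗ v i` of equiangular vectors are linearly independent.
-/

open scoped RealInnerProductSpace

open Matrix

attribute [local instance] Classical.propDecidable

/-- `maxEquiangularLines α d` is the maximum number of equiangular lines in `ℝ^d` with
common angle `arccos α`: the supremum of all `n` for which there exist `n` unit vectors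
in `ℝ^d` with pairwise inner products `±α`. -/
noncomputable def maxEquiangularLines (α : ℝ) (d : ℕ) : ℕ :=
  sSup {n : ℕ | ∃ v : Fin n → EuclideanSpace ℝ (Fin d),
    (∀ i, ‖v i‖ = 1) ∧ ∀ i j, i ≠ j → ⟪v i, v j⟫ = α ∨ ⟪v i, v j⟫ = -α}


open Module
open scoped TensorProduct

theorem Nat.succ_mul_div_eq (m n : ℕ) (hm : 0 < m) :
    (m + 1) * n / m = (m + 1) * (n / m) + n % m := by
  have key : (m + 1) * n = n % m + m * ((m + 1) * (n / m) + n % m) := by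
    conv_lhs => rw [← Nat.div_add_mod n m]
    ring
  rw [key, Nat.add_mul_div_left _ _ hm, Nat.div_eq_of_lt (Nat.mod_lt n hm), zero_add]

theorem nonempty_linearIsometry_euclideanSpace_of_finrank_le {𝕜 E : Type*} [RCLike 𝕜]
    [NormedAddCommGroup E] [InnerProductSpace 𝕜 E] [FiniteDimensional 𝕜 E] {d : ℕ}
    (h : finrank 𝕜 E ≤ d) : Nonempty (E →ₗᵢ[𝕜] EuclideanSpace 𝕜 (Fin d)) := by
  let b := (stdOrthonormalBasis 𝕜 E).toBasis
  let e : Fin (finrank 𝕜 E) → EuclideanSpace 𝕜 (Fin d) :=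
    fun i => EuclideanSpace.single (Fin.castLE h i) 1
  have hb : Orthonormal 𝕜 b := by simp [b]
  have he : Orthonormal 𝕜 (b.constr 𝕜 e ∘ b) := by
    simpa [Function.comp_def] using
      EuclideanSpace.orthonormal_single.comp _ (Fin.castLE_injective h)
  exact ⟨(b.constr 𝕜 e).isometryOfOrthonormal hb he⟩

theorem Matrix.exists_gram_eq_conjTranspose_mul_self {𝕜 R ι : Type*} [RCLike 𝕜] [Fintype R]
    (C : Matrix R ι 𝕜) {d : ℕ} (h : Fintype.card R ≤ d) :
    ∃ v : ι → EuclideanSpace 𝕜 (Fin d), gram 𝕜 v = Cᴴ * C := by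
  obtain ⟨φ⟩ := nonempty_linearIsometry_euclideanSpace_of_finrank_le (𝕜 := 𝕜)
    (E := EuclideanSpace 𝕜 R) (by simpa using h)
  refine ⟨fun j => φ (WithLp.toLp 2 (C.col j)), ?_⟩
  ext i j
  simp [gram_apply, PiLp.inner_apply, mul_apply, mul_comm]

theorem Matrix.exists_smul_conjTranspose_mul_self_add_smul_eq {S I : Type*} [Fintype S]
    [Fintype I] (D : Matrix S I ℝ) {a b : ℝ} (ha : 0 ≤ a) (hb : 0 ≤ b) :
    ∃ E : Matrix (S ⊕ Unit) I ℝ, a • (Dᴴ * D) + b • (of fun _ _ => 1) = Eᴴ * E := by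
  refine ⟨fromRows (√a • D) (of fun _ _ => √b), ?_⟩
  rw [conjTranspose_fromRows_eq_fromCols_conjTranspose, fromCols_mul_fromRows]
  ext i j
  simp [mul_apply, ← mul_assoc, Real.mul_self_sqrt ha, Real.mul_self_sqrt hb, Finset.mul_sum]

theorem Matrix.exists_conjTranspose_mul_self_eq_of_row_eq_zero {R m n : Type*} [Fintype m]
    [DecidableEq m] [NonUnitalNonAssocSemiring R] [StarRing R] (D : Matrix m n R) {i₀ : m}
    (h : D i₀ = 0) : ∃ C : Matrix (Fin (Fintype.card m - 1)) n R, Cᴴ * C = Dᴴ * D := by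
  let e : Fin (Fintype.card m - 1) ≃ {i // i ≠ i₀} :=
    (Fintype.equivFinOfCardEq (by simp [Fintype.card_subtype_compl])).symm
  refine ⟨D.submatrix (fun r => e r) id, ?_⟩
  ext j j'
  rw [mul_apply, mul_apply, Fintype.sum_eq_add_sum_subtype_ne _ i₀, ← e.sum_comp]
  simp [h]

theorem Matrix.IsHermitian.smul_one_sub_eq_conjTranspose_mul_self {n : Type*} [Fintype n]
    [DecidableEq n] {A : Matrix n n ℝ} (hA : A.IsHermitian) {c : ℝ}
    (hc : ∀ i, hA.eigenvalues i ≤ c) :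
    let D := diagonal (fun i => √(c - hA.eigenvalues i)) * (hA.eigenvectorUnitary : Matrix n n ℝ)ᴴ
    c • 1 - A = Dᴴ * D := by
  intro D
  set U : Matrix n n ℝ := (hA.eigenvectorUnitary : Matrix n n ℝ)
  set μ := hA.eigenvalues
  have hU : U * Uᴴ = 1 := Unitary.mul_star_self_of_mem hA.eigenvectorUnitary.2
  have hA' : A = U * diagonal μ * Uᴴ := by
    conv_lhs => rw [hA.spectral_theorem, Unitary.conjStarAlgAut_apply]
    simp [U, μ, star_eq_conjTranspose]
  have hsq : diagonal (fun i => √(c - μ i)) * diagonal (fun i => √(c - μ i)) =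
      c • 1 - diagonal μ := by
    ext i j
    by_cases h : i = j
    · simp [h, Real.mul_self_sqrt (sub_nonneg.2 (hc j))]
    · simp [h]
  calc c • 1 - A = U * (c • 1 - diagonal μ) * Uᴴ := by
        conv_lhs => rw [hA']
        rw [Matrix.mul_sub, Matrix.sub_mul, Matrix.mul_smul, Matrix.smul_mul, Matrix.mul_one, hU]
    _ = Dᴴ * D := by
        simp only [D, conjTranspose_mul, conjTranspose_conjTranspose, diagonal_conjTranspose,
          ← hsq, star_trivial, Matrix.mul_assoc]
        rfl

/-- The row of the factor belonging to the top eigenvalue vanishes, which saves one dimension. -/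
theorem Matrix.IsHermitian.exists_smul_one_sub_eq_conjTranspose_mul_self {n : Type*} [Fintype n]
    [DecidableEq n] {A : Matrix n n ℝ} (hA : A.IsHermitian) {c : ℝ}
    (hc : IsGreatest (Set.range hA.eigenvalues) c) :
    ∃ C : Matrix (Fin (Fintype.card n - 1)) n ℝ, c • 1 - A = Cᴴ * C := by
  obtain ⟨⟨i₀, hi₀⟩, hle⟩ := hc
  obtain ⟨C, hC⟩ := exists_conjTranspose_mul_self_eq_of_row_eq_zero
    (diagonal (fun i => √(c - hA.eigenvalues i)) * (hA.eigenvectorUnitary : Matrix n n ℝ)ᴴ)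
    (i₀ := i₀) (by ext j; simp [hi₀])
  exact ⟨C, hC ▸ hA.smul_one_sub_eq_conjTranspose_mul_self fun i => hle ⟨i, rfl⟩⟩

theorem Matrix.exists_smul_one_sub_fromBlocks_blockDiagonal_eq_conjTranspose_mul_self
    {R V : Type*} [Fintype R] [Fintype V] [DecidableEq V] {A : Matrix V V ℝ} {C : Matrix R V ℝ}
    {c : ℝ} (hC : c • 1 - A = Cᴴ * C) (hc : 0 ≤ c) (t r : ℕ) :
    ∃ D : Matrix ((R × Fin t) ⊕ Fin r) ((V × Fin t) ⊕ Fin r) ℝ,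
      c • 1 - fromBlocks (blockDiagonal fun _ => A) 0 0 0 = Dᴴ * D := by
  refine ⟨fromBlocks (blockDiagonal fun _ => C) 0 0 (√c • 1), ?_⟩
  rw [fromBlocks_conjTranspose, fromBlocks_multiply, blockDiagonal_conjTranspose,
    ← blockDiagonal_mul, ← hC]
  ext (⟨a, s⟩ | i) (⟨b, s'⟩ | j)
  · by_cases hs : s = s' <;> simp [blockDiagonal_apply, one_apply, Prod.ext_iff, hs]
  all_goals simp [one_apply, Real.mul_self_sqrt hc]

theorem isGreatest_sort_getD_card_sub_one {ι : Type*} [Fintype ι] [Nonempty ι] (f : ι → ℝ) :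
    IsGreatest (Set.range f)
      (((Finset.univ.val.map f).sort (· ≤ ·)).getD (Fintype.card ι - 1) 0) := by
  set L := (Finset.univ.val.map f).sort (· ≤ ·)
  have hlen : L.length = Fintype.card ι := by simp [L]
  have hlt : Fintype.card ι - 1 < L.length := by
    rw [hlen]
    exact Nat.sub_lt Fintype.card_pos one_pos
  have hmem : ∀ x, x ∈ L ↔ x ∈ Set.range f := by simp [L]
  rw [List.getD_eq_getElem _ _ hlt]
  refine ⟨(hmem _).1 (List.getElem_mem hlt), ?_⟩
  rintro _ hx
  obtain ⟨p, hp, rfl⟩ := List.getElem_of_mem ((hmem _).2 hx)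
  exact (Multiset.pairwise_sort _ _).rel_get_of_le (by simp; omega)

section adjMat

variable {V : Type*} [Fintype V] (G : SimpleGraph V)

theorem graphEigNth_one_isGreatest [Nonempty V] :
    IsGreatest (Set.range (adjMat_isHermitian G).eigenvalues) (graphEigNth G 1) :=
  isGreatest_sort_getD_card_sub_one _

theorem adjMat_apply_self (a : V) : adjMat G a a = 0 := by
  simp [adjMat]

theorem adjMat_apply_eq_zero_or_one (a b : V) : adjMat G a b = 0 ∨ adjMat G a b = 1 := by
  by_cases h : G.Adj a b <;> simp [adjMat, h]

/-- The box product with the edgeless graph on `Fin t` is `t` disjoint copies of `G`; the summand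
`⊥` adds `r` isolated vertices. -/
def disjointCopies (t r : ℕ) : SimpleGraph ((V × Fin t) ⊕ Fin r) :=
  (G □ (⊥ : SimpleGraph (Fin t))) ⊕g ⊥

theorem adjMat_disjointCopies (t r : ℕ) :
    adjMat (disjointCopies G t r) = fromBlocks (blockDiagonal fun _ => adjMat G) 0 0 0 := by
  ext (⟨a, s⟩ | i) (⟨b, s'⟩ | j)
  · by_cases hs : s = s' <;>
      simp [disjointCopies, adjMat, blockDiagonal_apply, SimpleGraph.boxProd_adj, hs]
  all_goals simp [disjointCopies, adjMat]

theorem exists_conjTranspose_mul_self_eq_adjMat_disjointCopies [DecidableEq V] [Nonempty V]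
    {c a b : ℝ} (hc : IsGreatest (Set.range (adjMat_isHermitian G).eigenvalues) c) (hc0 : 0 ≤ c)
    (ha : 0 ≤ a) (hb : 0 ≤ b) (t r : ℕ) :
    ∃ E : Matrix (((Fin (Fintype.card V - 1) × Fin t) ⊕ Fin r) ⊕ Unit) ((V × Fin t) ⊕ Fin r) ℝ,
      Eᴴ * E = a • (c • 1 - adjMat (disjointCopies G t r)) + b • of fun _ _ => 1 := by
  obtain ⟨C, hC⟩ := (adjMat_isHermitian G).exists_smul_one_sub_eq_conjTranspose_mul_self hc
  obtain ⟨D, hD⟩ :=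
    exists_smul_one_sub_fromBlocks_blockDiagonal_eq_conjTranspose_mul_self hC hc0 t r
  obtain ⟨E, hE⟩ := D.exists_smul_conjTranspose_mul_self_add_smul_eq ha hb
  exact ⟨E, by rw [← hE, ← hD, adjMat_disjointCopies]⟩

end adjMat

def IsEquiangular {ι E : Type*} [NormedAddCommGroup E] [InnerProductSpace ℝ E] (α : ℝ)
    (v : ι → E) : Prop :=
  (∀ i, ‖v i‖ = 1) ∧ ∀ i j, i ≠ j → ⟪v i, v j⟫ = α ∨ ⟪v i, v j⟫ = -α

namespace IsEquiangular

variable {ι E : Type*} [NormedAddCommGroup E] [InnerProductSpace ℝ E] {α : ℝ} {v : ι → E}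

theorem inner_sq [DecidableEq ι] (hv : IsEquiangular α v) (i j : ι) :
    ⟪v i, v j⟫ ^ 2 = if i = j then 1 else α ^ 2 := by
  split_ifs with h
  · simp [h, hv.1 j]
  · rcases hv.2 i j h with h' | h' <;> simp [h']

/-- The tensor squares have Gram matrix `(1 - α²) • 1 + α² • J`, which is positive definite. -/
theorem linearIndependent_tmul_self [Finite ι] (hv : IsEquiangular α v) (hα : α ^ 2 < 1) :
    LinearIndependent ℝ fun i => v i ⊗ₜ[ℝ] v i := by
  have := Fintype.ofFinite ι
  refine linearIndependent_of_posDef_gram ?_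
  have hgram : gram ℝ (fun i => v i ⊗ₜ[ℝ] v i) =
      (1 - α ^ 2) • (1 : Matrix ι ι ℝ) + α ^ 2 • vecMulVec (fun _ => 1) (fun _ => 1) := by
    ext i j
    rw [gram_apply, TensorProduct.inner_tmul, ← sq, hv.inner_sq]
    by_cases h : i = j <;> simp [h, one_apply, vecMulVec_apply]
  rw [hgram]
  exact ((PosDef.one).smul (by linarith)).add_posSemidef
    ((posSemidef_vecMulVec_self_star _).smul (sq_nonneg α))

theorem card_le [Fintype ι] [FiniteDimensional ℝ E] (hv : IsEquiangular α v) (hα : α ^ 2 < 1) :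
    Fintype.card ι ≤ finrank ℝ E * finrank ℝ E := by
  simpa using (hv.linearIndependent_tmul_self hα).fintype_card_le_finrank

theorem card_le_maxEquiangularLines [Fintype ι] {d : ℕ} {v : ι → EuclideanSpace ℝ (Fin d)}
    (hv : IsEquiangular α v) (hα : α ^ 2 < 1) : Fintype.card ι ≤ maxEquiangularLines α d := by
  refine le_csSup ⟨d * d, fun n ⟨w, hw⟩ => ?_⟩ ⟨v ∘ (Fintype.equivFin ι).symm, ?_⟩
  · simpa using IsEquiangular.card_le (v := w) hw hα
  · exact ⟨fun i => hv.1 _, fun i j hij => hv.2 _ _ (by simpa using hij)⟩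

theorem of_gram_eq [Fintype ι] [DecidableEq ι] (H : SimpleGraph ι) {c : ℝ}
    (hc : 2 * α * c + α = 1)
    (hv : gram ℝ v = (2 * α) • (c • 1 - adjMat H) + α • of fun _ _ => 1) :
    IsEquiangular α v := by
  have hinner : ∀ i j, ⟪v i, v j⟫ = 2 * α * (c * (1 : Matrix ι ι ℝ) i j - adjMat H i j) + α := by
    intro i j
    simpa using congrFun (congrFun hv i) j
  refine ⟨fun i => ?_, fun i j hij => ?_⟩
  · have h1 : ‖v i‖ ^ 2 = 1 := by
      rw [← real_inner_self_eq_norm_sq, hinner, one_apply_eq, adjMat_apply_self]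
      linarith
    exact (pow_eq_one_iff_of_nonneg (norm_nonneg _) two_ne_zero).1 h1
  · rw [hinner, one_apply_ne hij]
    rcases adjMat_apply_eq_zero_or_one H i j with h | h <;> rw [h]
    · left; ring
    · right; ring

end IsEquiangular

/-- **Lower bound construction.** Let `0 < α < 1`, `λ = (1−α)/(2α)`, and suppose some
finite simple graph has largest adjacency eigenvalue exactly `λ`, with `k` the minimum
number of vertices of such a graph (the spectral radius order of `λ`). Then for every
`d ≥ 2`, `N_α(d) ≥ ⌊k(d−1)/(k−1)⌋`. -/
theorem equiangular_lines_lower_bound (α : ℝ) (hα0 : 0 < α) (hα1 : α < 1)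
    (hne : {m : ℕ | ∃ G : SimpleGraph (Fin m),
      graphEigNth G 1 = (1 - α) / (2 * α)}.Nonempty)
    (k : ℕ)
    (hk : k = sInf {m : ℕ | ∃ G : SimpleGraph (Fin m),
      graphEigNth G 1 = (1 - α) / (2 * α)}) :
    ∀ d : ℕ, 2 ≤ d → k * (d - 1) / (k - 1) ≤ maxEquiangularLines α d := by
  intro d hd
  rcases Nat.lt_or_ge k 2 with hk2 | hk2
  · -- here `k * (d - 1) / (k - 1) = 0`, as `n / 0 = 0` in `ℕ`
    interval_cases k <;> simp
  obtain ⟨m, rfl⟩ : ∃ m, k = m + 1 + 1 := ⟨k - 2, by omega⟩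
  set c := (1 - α) / (2 * α)
  have hc : 2 * α * c + α = 1 := by
    simp only [c]
    field_simp
    ring
  obtain ⟨G, hG⟩ : m + 1 + 1 ∈ {n : ℕ | ∃ G : SimpleGraph (Fin n), graphEigNth G 1 = c} :=
    hk ▸ Nat.sInf_mem hne
  set t := (d - 1) / (m + 1)
  set r := (d - 1) % (m + 1)
  obtain ⟨E, hE⟩ := exists_conjTranspose_mul_self_eq_adjMat_disjointCopies G
    (hG ▸ graphEigNth_one_isGreatest G) (div_nonneg (by linarith) (by linarith))
    (a := 2 * α) (by linarith) hα0.le t r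
  obtain ⟨v, hv⟩ := E.exists_gram_eq_conjTranspose_mul_self (d := d) (by
    have : (m + 1) * t + r = d - 1 := Nat.div_add_mod _ _
    simp only [Fintype.card_sum, Fintype.card_prod, Fintype.card_fin, Fintype.card_unit,
      Nat.add_sub_cancel]
    lia)
  calc (m + 1 + 1) * (d - 1) / (m + 1 + 1 - 1) = (m + 1 + 1) * t + r :=
        Nat.succ_mul_div_eq (m + 1) (d - 1) m.succ_pos
    _ = _ := by simp
    _ ≤ maxEquiangularLines α d :=
        (IsEquiangular.of_gram_eq _ hc (hv.trans hE)).card_le_maxEquiangularLines (by nlinarith)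
end

section
/- If v_1, …, v_n are unit vectors in C^d, and there exists a real number α with 0 < α < 1 such that |⟨v_i, v_j⟩| = α for all i ≠ j, then n ≤ d². -/
/-!
The rank-one projections `vᵢ vᵢᴴ` live in the `d²`-dimensional space of `d × d` matrices, and
their Frobenius inner products are `|⟨vᵢ, vⱼ⟩|²`. For an equiangular family of unit vectors
this Gram matrix is `α² J + (1 - α²) I`, which is positive definite when `α < 1`, so the
projections are linearly independent and there are at most `d²` of them.
-/

open Matrix
open scoped InnerProductSpace ComplexOrder ComplexConjugate

theorem Matrix.posDef_smul_vecMulVec_one_add_smul_one {n 𝕜 : Type*} [Fintype n] [DecidableEq n]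
    [RCLike 𝕜] {a b : ℝ} (ha : 0 ≤ a) (hb : 0 < b) :
    (a • vecMulVec (1 : n → 𝕜) 1 + b • (1 : Matrix n n 𝕜)).PosDef := by
  have hJ : (vecMulVec (1 : n → 𝕜) 1).PosSemidef := by
    simpa using posSemidef_vecMulVec_self_star (1 : n → 𝕜)
  exact PosDef.posSemidef_add (hJ.smul ha) (PosDef.one.smul hb)

namespace EuclideanSpace

variable {𝕜 ι n : Type*} [RCLike 𝕜] [Fintype ι]

/-- The matrix `x xᴴ`, flattened so that the inner product is the Frobenius one. -/
def outerSelf (x : EuclideanSpace 𝕜 ι) : EuclideanSpace 𝕜 (ι × ι) :=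
  WithLp.toLp 2 fun p => x p.1 * conj (x p.2)

theorem inner_outerSelf (x y : EuclideanSpace 𝕜 ι) :
    ⟪outerSelf x, outerSelf y⟫_𝕜 = (‖⟪x, y⟫_𝕜‖ : 𝕜) ^ 2 := by
  rw [← RCLike.mul_conj, inner_eq_star_dotProduct, inner_eq_star_dotProduct]
  simp only [dotProduct, outerSelf, Pi.star_apply, star_mul', RCLike.star_def,
    RingHomCompTriple.comp_apply, RingHom.id_apply, Fintype.sum_prod_type, map_sum, map_mul,
    Finset.sum_mul_sum]
  exact Finset.sum_congr rfl fun _ _ => Finset.sum_congr rfl fun _ _ => by ring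

section Equiangular

variable {v : n → EuclideanSpace 𝕜 ι} {α : ℝ}

theorem gram_outerSelf_of_equiangular [DecidableEq n] (hunit : ∀ i, ‖v i‖ = 1)
    (hangle : ∀ i j, i ≠ j → ‖⟪v i, v j⟫_𝕜‖ = α) :
    gram 𝕜 (outerSelf ∘ v) = α ^ 2 • vecMulVec 1 1 + (1 - α ^ 2) • (1 : Matrix n n 𝕜) := by
  ext i j
  simp only [gram_apply, Function.comp_apply, inner_outerSelf]
  rcases eq_or_ne i j with rfl | hij
  · simp [inner_self_eq_norm_sq_to_K, hunit, RCLike.real_smul_eq_coe_mul]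
  · simp [hangle i j hij, hij, RCLike.real_smul_eq_coe_mul]

theorem linearIndependent_outerSelf_of_equiangular [Fintype n] (hunit : ∀ i, ‖v i‖ = 1)
    (hangle : ∀ i j, i ≠ j → ‖⟪v i, v j⟫_𝕜‖ = α) (hα : |α| < 1) :
    LinearIndependent 𝕜 (outerSelf ∘ v) := by
  classical
  refine linearIndependent_of_posDef_gram ?_
  rw [gram_outerSelf_of_equiangular hunit hangle]
  exact posDef_smul_vecMulVec_one_add_smul_one (sq_nonneg α)
    (sub_pos.2 (sq_lt_one_iff_abs_lt_one α |>.2 hα))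

theorem card_le_card_sq_of_equiangular [Fintype n] (hunit : ∀ i, ‖v i‖ = 1)
    (hangle : ∀ i j, i ≠ j → ‖⟪v i, v j⟫_𝕜‖ = α) (hα : |α| < 1) :
    Fintype.card n ≤ Fintype.card ι ^ 2 := by
  simpa [sq] using
    (linearIndependent_outerSelf_of_equiangular hunit hangle hα).fintype_card_le_finrank

end Equiangular

end EuclideanSpace

/-- **Complex Gerzon bound.** If `v 1, …, v n` are unit vectors in `ℂ^d` whose pairwise
Hermitian inner products all have modulus `α` for some `0 < α < 1`, then `n ≤ d²`. -/
theorem complex_gerzon_bound (n d : ℕ) (v : Fin n → EuclideanSpace ℂ (Fin d))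
    (hunit : ∀ i, ‖v i‖ = 1)
    (hangle : ∃ α : ℝ, 0 < α ∧ α < 1 ∧
      ∀ i j, i ≠ j → ‖(inner ℂ (v i) (v j) : ℂ)‖ = α) :
    n ≤ d ^ 2 := by
  obtain ⟨α, hα₀, hα₁, hα⟩ := hangle
  simpa using EuclideanSpace.card_le_card_sq_of_equiangular hunit hα
    (abs_lt.2 ⟨by linarith, hα₁⟩)
end
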